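/- arXiv:2306.14512 — 3 statements merged into one kernel-verified Lean document; each statement's English description precedes it below -/
import Mathlib

section
/- The diameter of the metric space X of all chords of a circle of radius R > 0, equipped with the Hausdorff distance, equals 2R. (The supremum 2R is attained only in the limit, by pairs of parallel chords approaching opposite points of the circle.) -/
open Metric Real MeasureTheory
open scoped ENNReal NNReal

noncomputable section

/-- A chord of the circle of radius `R` centered at the origin in the plane `ℂ`. -/
def IsChord (R : ℝ) (s : Set ℂ) : Prop :=
  ∃ A B : ℂ, A ≠ B ∧ A ∈ Metric.sphere (0 : ℂ) R ∧ B ∈ Metric.sphere (0 : ℂ) R ∧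
    s = segment ℝ A B

/-- The space of chords of the circle of radius `R`, as nonempty compact subsets of the
plane, equipped (via the subtype instance) with the Hausdorff metric. -/
def Chords (R : ℝ) : Type :=
  { s : TopologicalSpace.NonemptyCompacts ℂ // IsChord R (s : Set ℂ) }

instance (R : ℝ) : MetricSpace (Chords R) := by unfold Chords; infer_instance

instance (R : ℝ) : MeasurableSpace (Chords R) := borel _

instance (R : ℝ) : BorelSpace (Chords R) := ⟨rfl⟩

/-- The point of the circle of radius `R` at angle `θ`. -/
def pt (R θ : ℝ) : ℂ := R * Complex.exp (θ * Complex.I)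

lemma chords_dist_eq (R : ℝ) (x y : Chords R) :
    dist x y = Metric.hausdorffDist (x.1 : Set ℂ) (y.1 : Set ℂ) := rfl

lemma chord_subset_ball {R : ℝ} (x : Chords R) :
    (x.1 : Set ℂ) ⊆ Metric.closedBall 0 R := by
  obtain ⟨A, B, hAB, hA, hB, hs⟩ := x.2
  rw [hs]
  exact (convex_closedBall (0 : ℂ) R).segment_subset
    (Metric.sphere_subset_closedBall hA) (Metric.sphere_subset_closedBall hB)

lemma chords_dist_le (R : ℝ) (hR : 0 < R) (x y : Chords R) : dist x y ≤ 2 * R := by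
  rw [chords_dist_eq]
  calc Metric.hausdorffDist (x.1 : Set ℂ) (y.1 : Set ℂ)
      ≤ Metric.diam ((x.1 : Set ℂ) ∪ (y.1 : Set ℂ)) :=
        Metric.hausdorffDist_le_diam x.1.nonempty x.1.isCompact.isBounded
          y.1.nonempty y.1.isCompact.isBounded
    _ ≤ Metric.diam (Metric.closedBall (0 : ℂ) R) :=
        Metric.diam_mono (Set.union_subset (chord_subset_ball x) (chord_subset_ball y))
          Metric.isBounded_closedBall
    _ ≤ 2 * R := Metric.diam_closedBall hR.le

lemma isCompact_seg (A B : ℂ) : IsCompact (segment ℝ A B) := by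
  rw [segment_eq_image]
  exact isCompact_Icc.image (by continuity)

lemma mem_sphere_mk {R c s : ℝ} (hR : 0 ≤ R) (h : c ^ 2 + s ^ 2 = R ^ 2) :
    (c : ℂ) + s * Complex.I ∈ Metric.sphere (0 : ℂ) R := by
  simp only [Metric.mem_sphere, Complex.dist_eq, sub_zero]
  rw [Complex.norm_def, Complex.normSq_add_mul_I, h, Real.sqrt_sq hR]

/-- The segment from `A` to `B` as a nonempty compact set. -/
def segNC (A B : ℂ) : TopologicalSpace.NonemptyCompacts ℂ :=
  ⟨⟨segment ℝ A B, isCompact_seg A B⟩, ⟨A, left_mem_segment _ _ _⟩⟩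

lemma vchord_isChord (R c s : ℝ) (hR : 0 ≤ R) (h : c ^ 2 + s ^ 2 = R ^ 2) (hs : s ≠ 0) :
    IsChord R (segNC ((c : ℂ) + s * Complex.I) ((c : ℂ) + (-s) * Complex.I) : Set ℂ) := by
  refine ⟨(c : ℂ) + s * Complex.I, (c : ℂ) + (-s) * Complex.I, ?_, mem_sphere_mk hR h, ?_, rfl⟩
  · intro hEq
    apply hs
    have := congrArg Complex.im hEq
    simp at this
    linarith
  · have h' : c ^ 2 + (-s) ^ 2 = R ^ 2 := by nlinarith [h]
    have := mem_sphere_mk hR h'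
    rwa [Complex.ofReal_neg] at this

/-- The vertical chord at abscissa `c`, with half-height `s`. -/
def vchord (R c s : ℝ) (hR : 0 ≤ R) (h : c ^ 2 + s ^ 2 = R ^ 2) (hs : s ≠ 0) : Chords R :=
  ⟨segNC ((c : ℂ) + s * Complex.I) ((c : ℂ) + (-s) * Complex.I), vchord_isChord R c s hR h hs⟩

lemma vchord_re {R c s : ℝ} (hR : 0 ≤ R) (h : c ^ 2 + s ^ 2 = R ^ 2) (hs : s ≠ 0)
    {z : ℂ} (hz : z ∈ ((vchord R c s hR h hs).1 : Set ℂ)) : z.re = c := by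
  have hz' : z ∈ segment ℝ ((c : ℂ) + s * Complex.I) ((c : ℂ) + (-s) * Complex.I) := hz
  obtain ⟨a, b, ha, hb, hab, rfl⟩ := hz'
  have hA : ((c : ℂ) + s * Complex.I).re = c := by simp
  have hB : ((c : ℂ) + (-s) * Complex.I).re = c := by simp
  rw [Complex.add_re, Complex.smul_re, Complex.smul_re, hA, hB, smul_eq_mul, smul_eq_mul,
    ← add_mul, hab, one_mul]

/-- The diameter of the metric space of all chords of a circle of radius `R > 0`,
with the Hausdorff metric, equals `2 R`. -/
theorem diam_chords (R : ℝ) (hR : 0 < R) :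
    Metric.diam (Set.univ : Set (Chords R)) = 2 * R := by
  have hbdd : Bornology.IsBounded (Set.univ : Set (Chords R)) :=
    Metric.isBounded_iff.2 ⟨2 * R, fun x _ y _ => chords_dist_le R hR x y⟩
  apply le_antisymm
  · exact Metric.diam_le_of_forall_dist_le (by positivity)
      (fun x _ y _ => chords_dist_le R hR x y)
  · refine le_of_forall_pos_le_add fun ε hε => ?_
    set c : ℝ := R - min (ε / 2) (R / 2) with hc
    have hc0 : 0 < c := by
      have : min (ε / 2) (R / 2) ≤ R / 2 := min_le_right _ _
      simp only [hc]; linarith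
    have hcR : c < R := by
      have : 0 < min (ε / 2) (R / 2) := lt_min (by linarith) (by linarith)
      simp only [hc]; linarith
    set s : ℝ := Real.sqrt (R ^ 2 - c ^ 2) with hsdef
    have hsq : c ^ 2 + s ^ 2 = R ^ 2 := by
      rw [hsdef, Real.sq_sqrt (by nlinarith)]; ring
    have hs0 : 0 < s := Real.sqrt_pos.2 (by nlinarith)
    have hsq' : (-c) ^ 2 + s ^ 2 = R ^ 2 := by rw [neg_pow]; ring_nf; ring_nf at hsq; linarith
    set x := vchord R c s hR.le hsq hs0.ne'
    set y := vchord R (-c) s hR.le hsq' hs0.ne'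
    have hfin : EMetric.hausdorffEdist (x.1 : Set ℂ) (y.1 : Set ℂ) ≠ ⊤ :=
      Metric.hausdorffEdist_ne_top_of_nonempty_of_bounded x.1.nonempty y.1.nonempty
        x.1.isCompact.isBounded y.1.isCompact.isBounded
    have key : 2 * c ≤ dist x y := by
      rw [chords_dist_eq]
      refine le_trans ?_ (Metric.infDist_le_hausdorffDist_of_mem
        (x := (c : ℂ) + s * Complex.I) (left_mem_segment _ _ _) hfin)
      refine le_of_not_gt fun hlt => ?_
      obtain ⟨z, hz, hdz⟩ := (Metric.infDist_lt_iff y.1.nonempty).1 hlt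
      refine absurd hdz (not_lt.2 ?_)
      have hzre : z.re = -c := vchord_re hR.le hsq' hs0.ne' hz
      have : |(((c : ℂ) + s * Complex.I) - z).re| ≤ dist ((c : ℂ) + s * Complex.I) z := by
        rw [Complex.dist_eq]; exact Complex.abs_re_le_norm _
      have hre : (((c : ℂ) + s * Complex.I) - z).re = 2 * c := by
        simp [Complex.sub_re, hzre]; ring
      rw [hre] at this
      calc 2 * c ≤ |2 * c| := le_abs_self _
        _ ≤ dist ((c : ℂ) + s * Complex.I) z := this
    have hdiam : dist x y ≤ Metric.diam (Set.univ : Set (Chords R)) :=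
      Metric.dist_le_diam_of_mem hbdd (Set.mem_univ _) (Set.mem_univ _)
    have hmin : min (ε / 2) (R / 2) ≤ ε / 2 := min_le_left _ _
    have h2R : 2 * R = 2 * c + 2 * min (ε / 2) (R / 2) := by rw [hc]; ring
    have h1 : 2 * c ≤ Metric.diam (Set.univ : Set (Chords R)) := key.trans hdiam
    have h3 : 2 * min (ε / 2) (R / 2) ≤ ε := by linarith [hmin]
    have h4 : 2 * R ≤ Metric.diam (Set.univ : Set (Chords R)) + ε := by
      rw [h2R]; exact add_le_add h1 h3
    exact h4
end
end

section
/- The s-dimensional Hausdorff outer measure of a closed tube T̄(AB, CD) of chords (not containing a diameter, subtending arcs of length γ > 0 on each side) equals 0 for s > 2, equals γ² for s = 2, and equals ∞ for s < 2. Consequently the Hausdorff dimension of any closed tube with γ > 0 equals 2. -/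
open Metric Real MeasureTheory
open scoped ENNReal NNReal Topology
open Filter

noncomputable section

lemma pt_def (R θ : ℝ) : pt R θ = R * (Real.cos θ + Real.sin θ * Complex.I) := by
  rw [pt, Complex.exp_mul_I, ← Complex.ofReal_cos, ← Complex.ofReal_sin]

lemma normSq_pt_sub (R a b : ℝ) :
    Complex.normSq (pt R a - pt R b) = 4 * R ^ 2 * Real.sin ((a - b) / 2) ^ 2 := by
  have h : pt R a - pt R b =
      Complex.ofReal (R * (Real.cos a - Real.cos b)) +
        Complex.ofReal (R * (Real.sin a - Real.sin b)) * Complex.I := by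
    rw [pt_def, pt_def]; push_cast; ring
  rw [h, Complex.normSq_add_mul_I]
  have hs := Real.cos_sq ((a - b) / 2)
  have hs2 := Real.sin_sq_add_cos_sq ((a - b) / 2)
  have hc := Real.cos_sub a b
  rw [show 2 * ((a-b)/2) = a - b by ring] at hs
  nlinarith [Real.sin_sq_add_cos_sq a, Real.sin_sq_add_cos_sq b]

lemma dist_pt (R : ℝ) (hR : 0 ≤ R) (a b : ℝ) :
    dist (pt R a) (pt R b) = 2 * R * |Real.sin ((a - b) / 2)| := by
  rw [Complex.dist_eq, Complex.norm_def, normSq_pt_sub]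
  rw [show 4 * R ^ 2 * Real.sin ((a - b) / 2) ^ 2 = (2 * R * |Real.sin ((a - b) / 2)|) ^ 2 by
    rw [mul_pow, mul_pow, sq_abs]; ring]
  exact Real.sqrt_sq (by positivity)

lemma re_part (R a a' b : ℝ) :
    ((pt R a' - pt R a) * (starRingEnd ℂ) (pt R b - pt R a)).re =
      R ^ 2 * (Real.cos (a' - b) - Real.cos (a' - a) - Real.cos (a - b) + 1) := by
  simp only [pt_def]
  rw [Real.cos_sub, Real.cos_sub, Real.cos_sub]
  simp only [Complex.mul_re, Complex.mul_im, Complex.sub_re, Complex.sub_im,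
    Complex.conj_re, Complex.conj_im, Complex.ofReal_re, Complex.ofReal_im,
    Complex.I_re, Complex.I_im, Complex.add_re, Complex.add_im, map_sub]
  nlinarith [Real.sin_sq_add_cos_sq a, Real.sin_sq_add_cos_sq b, Real.sin_sq_add_cos_sq a']

lemma trig_id (x y : ℝ) :
    Real.cos (2*x + 2*y) - Real.cos (2*x) - Real.cos (2*y) + 1 =
      -(4 * (Real.cos (x + y) * (Real.sin x * Real.sin y))) := by
  rw [show 2*x+2*y = 2*(x+y) by ring, Real.cos_two_mul, Real.cos_two_mul, Real.cos_two_mul,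
    Real.cos_add]
  linear_combination (-2*Real.sin y^2) * Real.sin_sq_add_cos_sq x +
    (2*Real.cos x^2 - 2) * Real.sin_sq_add_cos_sq y

lemma dist_pt_le_on_segment (R : ℝ) (a a' b : ℝ)
    (H : 0 ≤ Real.cos ((a' - b) / 2) * (Real.sin ((a' - a) / 2) * Real.sin ((a - b) / 2))) :
    ∀ x ∈ segment ℝ (pt R a) (pt R b), dist (pt R a') (pt R a) ≤ dist (pt R a') x := by
  rintro x ⟨s, t, hs, ht, hst, rfl⟩
  have hre : ((pt R a' - pt R a) * (starRingEnd ℂ) (pt R b - pt R a)).re ≤ 0 := by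
    have h2 := trig_id ((a'-a)/2) ((a-b)/2)
    have e1 : 2*((a'-a)/2) = a' - a := by ring
    have e2 : 2*((a-b)/2) = a - b := by ring
    have e3 : a' - a + (a - b) = a' - b := by ring
    have e4 : (a'-a)/2 + (a-b)/2 = (a'-b)/2 := by ring
    rw [e1, e2, e3, e4] at h2
    rw [re_part, h2]
    nlinarith [sq_nonneg R]
  have hx : pt R a' - (s • pt R a + t • pt R b)
      = (pt R a' - pt R a) - (t:ℂ) * (pt R b - pt R a) := by
    simp only [Complex.real_smul]
    have hsc : (s:ℂ) = 1 - (t:ℂ) := by norm_cast; linarith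
    rw [hsc]; ring
  have key : Complex.normSq (pt R a' - pt R a) ≤
      Complex.normSq ((pt R a' - pt R a) - (t:ℂ) * (pt R b - pt R a)) := by
    conv_rhs => rw [Complex.normSq_sub]
    have h1 : Complex.normSq ((t:ℝ) * (pt R b - pt R a) : ℂ)
        = t^2 * Complex.normSq (pt R b - pt R a) := by
      rw [Complex.normSq_mul, Complex.normSq_ofReal]; ring
    have h2 : ((pt R a' - pt R a) * (starRingEnd ℂ) ((t:ℝ) * (pt R b - pt R a))).re
        = t * ((pt R a' - pt R a) * (starRingEnd ℂ) (pt R b - pt R a)).re := by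
      rw [show ((pt R a' - pt R a) * (starRingEnd ℂ) ((t:ℝ) * (pt R b - pt R a)))
          = (t:ℂ) * ((pt R a' - pt R a) * (starRingEnd ℂ) (pt R b - pt R a)) by
        rw [map_mul, Complex.conj_ofReal]; ring]
      exact Complex.re_ofReal_mul t _
    rw [h1, h2] 
    nlinarith [Complex.normSq_nonneg (pt R b - pt R a), sq_nonneg t,
      mul_nonneg ht (neg_nonneg.2 hre)]
  rw [Complex.dist_eq, Complex.dist_eq, hx, Complex.norm_def, Complex.norm_def]
  exact Real.sqrt_le_sqrt key

lemma isCompact_seg_s9 (x y : ℂ) : IsCompact (segment ℝ x y) := by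
  rw [segment_eq_image]
  exact isCompact_Icc.image <|
    ((continuous_const.sub continuous_id).smul continuous_const).add
      (continuous_id.smul continuous_const)

lemma hausdorffEdist_seg_ne_top (x y x' y' : ℂ) :
    EMetric.hausdorffEdist (segment ℝ x y) (segment ℝ x' y') ≠ ⊤ :=
  Metric.hausdorffEdist_ne_top_of_nonempty_of_bounded ⟨x, left_mem_segment ℝ x y⟩
    ⟨x', left_mem_segment ℝ x' y'⟩ (isCompact_seg_s9 x y).isBounded (isCompact_seg_s9 x' y').isBounded

lemma hausdorffDist_seg_le (x y x' y' : ℂ) {r : ℝ} (hr : 0 ≤ r)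
    (h1 : dist x x' ≤ r) (h2 : dist y y' ≤ r) :
    hausdorffDist (segment ℝ x y) (segment ℝ x' y') ≤ r := by
  have key : ∀ a b : ℝ, 0 ≤ a → 0 ≤ b → a + b = 1 →
      dist (a • x + b • y) (a • x' + b • y') ≤ r := by
    intro a b ha hb hab
    rw [dist_eq_norm]
    have : a • x + b • y - (a • x' + b • y') = a • (x - x') + b • (y - y') := by
      rw [smul_sub, smul_sub]; abel
    rw [this]
    calc ‖a • (x - x') + b • (y - y')‖ ≤ ‖a • (x - x')‖ + ‖b • (y - y')‖ := norm_add_le _ _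
      _ = a * dist x x' + b * dist y y' := by
          rw [norm_smul, norm_smul, Real.norm_eq_abs, Real.norm_eq_abs,
            abs_of_nonneg ha, abs_of_nonneg hb, dist_eq_norm, dist_eq_norm]
      _ ≤ a * r + b * r := by
          have := mul_le_mul_of_nonneg_left h1 ha
          have := mul_le_mul_of_nonneg_left h2 hb
          linarith
      _ = r := by rw [← add_mul, hab, one_mul]
  apply hausdorffDist_le_of_mem_dist hr
  · rintro z ⟨a, b, ha, hb, hab, rfl⟩
    exact ⟨a • x' + b • y', ⟨a, b, ha, hb, hab, rfl⟩, key a b ha hb hab⟩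
  · rintro z ⟨a, b, ha, hb, hab, rfl⟩
    refine ⟨a • x + b • y, ⟨a, b, ha, hb, hab, rfl⟩, ?_⟩
    rw [dist_comm]; exact key a b ha hb hab

lemma le_hausdorffDist_seg {x y x' y' : ℂ} {r : ℝ}
    (h : ∀ z ∈ segment ℝ x y, r ≤ dist x' z) :
    r ≤ hausdorffDist (segment ℝ x y) (segment ℝ x' y') := by
  have h1 : r ≤ infDist x' (segment ℝ x y) := by
    rw [infDist_eq_iInf]
    have : Nonempty (segment ℝ x y) := ⟨⟨x, left_mem_segment ℝ x y⟩⟩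
    exact le_ciInf fun z => h z z.2
  calc r ≤ infDist x' (segment ℝ x y) := h1
    _ ≤ hausdorffDist (segment ℝ x' y') (segment ℝ x y) :=
        infDist_le_hausdorffDist_of_mem (left_mem_segment ℝ x' y')
          (hausdorffEdist_seg_ne_top x' y' x y)
    _ = _ := hausdorffDist_comm ..

lemma hausdorffDist_segs (R α β : ℝ) (hα : 0 < α) (hβ : β < π/2)
    {u u' v v' : ℝ} (hu : u ∈ Set.Icc α β) (hu' : u' ∈ Set.Icc α β)
    (hv : v ∈ Set.Icc (-β) (-α)) (hv' : v' ∈ Set.Icc (-β) (-α)) :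
    hausdorffDist (segment ℝ (pt R u) (pt R v)) (segment ℝ (pt R u') (pt R v'))
      = max (dist (pt R u) (pt R u')) (dist (pt R v) (pt R v')) := by
  obtain ⟨hu1, hu2⟩ := hu
  obtain ⟨hu'1, hu'2⟩ := hu'
  obtain ⟨hv1, hv2⟩ := hv
  obtain ⟨hv'1, hv'2⟩ := hv'
  have hπ := Real.pi_pos
  have claim1 : dist (pt R u) (pt R u') ≤
      hausdorffDist (segment ℝ (pt R u) (pt R v)) (segment ℝ (pt R u') (pt R v')) := by
    rcases le_total u u' with h | h
    · have sign : 0 ≤ Real.cos ((u' - v)/2) * (Real.sin ((u' - u)/2) * Real.sin ((u - v)/2)) := by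
        apply mul_nonneg
        · exact Real.cos_nonneg_of_mem_Icc ⟨by linarith, by linarith⟩
        · exact mul_nonneg (Real.sin_nonneg_of_nonneg_of_le_pi (by linarith) (by linarith))
            (Real.sin_nonneg_of_nonneg_of_le_pi (by linarith) (by linarith))
      rw [dist_comm]
      exact le_hausdorffDist_seg (dist_pt_le_on_segment R u u' v sign)
    · have sign : 0 ≤ Real.cos ((u - v')/2) * (Real.sin ((u - u')/2) * Real.sin ((u' - v')/2)) := by
        apply mul_nonneg
        · exact Real.cos_nonneg_of_mem_Icc ⟨by linarith, by linarith⟩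
        · exact mul_nonneg (Real.sin_nonneg_of_nonneg_of_le_pi (by linarith) (by linarith))
            (Real.sin_nonneg_of_nonneg_of_le_pi (by linarith) (by linarith))
      rw [hausdorffDist_comm]
      exact le_hausdorffDist_seg (dist_pt_le_on_segment R u' u v' sign)
  have claim2 : dist (pt R v) (pt R v') ≤
      hausdorffDist (segment ℝ (pt R u) (pt R v)) (segment ℝ (pt R u') (pt R v')) := by
    rw [segment_symm ℝ (pt R u) (pt R v), segment_symm ℝ (pt R u') (pt R v')]
    rcases le_total v' v with h | h
    · have sign : 0 ≤ Real.cos ((v' - u)/2) * (Real.sin ((v' - v)/2) * Real.sin ((v - u)/2)) := by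
        apply mul_nonneg
        · exact Real.cos_nonneg_of_mem_Icc ⟨by linarith, by linarith⟩
        · exact mul_nonneg_of_nonpos_of_nonpos
            (Real.sin_nonpos_of_nonpos_of_neg_pi_le (by linarith) (by linarith))
            (Real.sin_nonpos_of_nonpos_of_neg_pi_le (by linarith) (by linarith))
      rw [dist_comm]
      exact le_hausdorffDist_seg (dist_pt_le_on_segment R v v' u sign)
    · have sign : 0 ≤ Real.cos ((v - u')/2) * (Real.sin ((v - v')/2) * Real.sin ((v' - u')/2)) := by
        apply mul_nonneg
        · exact Real.cos_nonneg_of_mem_Icc ⟨by linarith, by linarith⟩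
        · exact mul_nonneg_of_nonpos_of_nonpos
            (Real.sin_nonpos_of_nonpos_of_neg_pi_le (by linarith) (by linarith))
            (Real.sin_nonpos_of_nonpos_of_neg_pi_le (by linarith) (by linarith))
      rw [hausdorffDist_comm]
      exact le_hausdorffDist_seg (dist_pt_le_on_segment R v' v u' sign)
  refine le_antisymm ?_ (max_le claim1 claim2)
  exact hausdorffDist_seg_le _ _ _ _ (le_trans dist_nonneg (le_max_left _ _))
    (le_max_left _ _) (le_max_right _ _)

lemma pt_mem_sphere (R θ : ℝ) (hR : 0 ≤ R) : pt R θ ∈ Metric.sphere (0 : ℂ) R := by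
  simp only [Metric.mem_sphere, Complex.dist_eq, sub_zero, pt, map_mul,
    norm_mul, Complex.norm_real, Real.norm_eq_abs, abs_of_nonneg hR]
  rw [show (θ : ℂ) * Complex.I = (θ:ℝ) * Complex.I by norm_cast,
    Complex.norm_exp_ofReal_mul_I, mul_one]

lemma pt_ne (R a b : ℝ) (hR : 0 < R) (h1 : 0 < a - b) (h2 : a - b < 2 * π) :
    pt R a ≠ pt R b := by
  intro h
  have hd := dist_pt R hR.le a b
  rw [h, dist_self] at hd
  have hs : 0 < Real.sin ((a - b) / 2) :=
    Real.sin_pos_of_pos_of_lt_pi (by linarith) (by linarith)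
  rw [abs_of_pos hs] at hd
  nlinarith


def chordMk (R : ℝ) (hR : 0 < R) (u v : ℝ) (h1 : 0 < u - v) (h2 : u - v < 2 * π) :
    Chords R :=
  ⟨⟨⟨segment ℝ (pt R u) (pt R v), isCompact_seg_s9 _ _⟩, ⟨_, left_mem_segment ℝ _ _⟩⟩,
    pt R u, pt R v, pt_ne R u v hR h1 h2, pt_mem_sphere R u hR.le, pt_mem_sphere R v hR.le, rfl⟩

lemma chordMk_coe (R : ℝ) (hR : 0 < R) (u v : ℝ) (h1 : 0 < u - v) (h2 : u - v < 2 * π) :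
    ((chordMk R hR u v h1 h2).1 : Set ℂ) = segment ℝ (pt R u) (pt R v) := rfl

lemma chords_dist (R : ℝ) (χ χ' : Chords R) :
    dist χ χ' = hausdorffDist (χ.1 : Set ℂ) (χ'.1 : Set ℂ) := rfl

lemma abs_sin_half (x : ℝ) (h : |x| / 2 ≤ π) : |Real.sin (x / 2)| = Real.sin (|x| / 2) := by
  rcases le_or_gt 0 x with h0 | h0
  · rw [abs_of_nonneg h0] at h ⊢
    exact abs_of_nonneg (Real.sin_nonneg_of_nonneg_of_le_pi (by linarith) h)
  · rw [abs_of_neg h0] at h ⊢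
    rw [show -x / 2 = -(x/2) by ring, Real.sin_neg]
    rw [abs_of_nonpos (Real.sin_nonpos_of_nonpos_of_neg_pi_le (by linarith) (by linarith))]

lemma sin_concave_lb {c t : ℝ} (hc : 0 < c) (hcπ : c ≤ π) (ht : 0 ≤ t) (htc : t ≤ c) :
    t * Real.sin c ≤ c * Real.sin t := by
  have hcon := strictConcaveOn_sin_Icc.concaveOn
  have h0 : (0:ℝ) ∈ Set.Icc (0:ℝ) π := ⟨le_refl _, Real.pi_pos.le⟩
  have hcmem : c ∈ Set.Icc (0:ℝ) π := ⟨hc.le, hcπ⟩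
  have ha : 0 ≤ 1 - t / c := by
    rw [sub_nonneg]; exact div_le_one_of_le₀ htc hc.le
  have hb : 0 ≤ t / c := div_nonneg ht hc.le
  have hab : (1 - t / c) + t / c = 1 := by ring
  have := hcon.2 h0 hcmem ha hb hab
  simp only [smul_eq_mul, mul_zero, zero_add, Real.sin_zero] at this
  rw [show t / c * c = t by field_simp] at this
  have := mul_le_mul_of_nonneg_left this hc.le
  calc t * Real.sin c = c * (t / c * Real.sin c) := by field_simp
    _ ≤ c * Real.sin t := by
        apply mul_le_mul_of_nonneg_left _ hc.le
        linarith [this]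

lemma tendsto_nat_mul_sin (c : ℝ) (hc : 0 < c) :
    Filter.Tendsto (fun n : ℕ => (n : ℝ) * Real.sin (c / n)) Filter.atTop (𝓝 c) := by
  have h1 : Filter.Tendsto (fun x : ℝ => Real.sin x / x) (nhdsWithin 0 {0}ᶜ) (𝓝 1) := by
    have h := hasDerivAt_iff_tendsto_slope.mp (Real.hasDerivAt_sin 0)
    rw [Real.cos_zero] at h
    refine h.congr' ?_
    filter_upwards with x
    simp [slope_def_field]
  have h2 : Filter.Tendsto (fun n : ℕ => c / (n : ℝ)) Filter.atTop (nhdsWithin 0 {0}ᶜ) := by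
    apply tendsto_nhdsWithin_of_tendsto_nhds_of_eventually_within
    · exact tendsto_const_div_atTop_nhds_zero_nat c
    · filter_upwards [Filter.eventually_ge_atTop 1] with n hn
      have hn0 : (0:ℝ) < n := by exact_mod_cast hn
      simp only [Set.mem_compl_iff, Set.mem_singleton_iff]
      positivity
  have h3 := (h1.comp h2).const_mul c
  rw [mul_one] at h3
  refine h3.congr' ?_
  filter_upwards [Filter.eventually_ge_atTop 1] with n hn
  have hn0 : (0:ℝ) < n := by exact_mod_cast hn
  show c * (Real.sin (c / n) / (c / n)) = (n:ℝ) * Real.sin (c / n)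
  field_simp


set_option maxHeartbeats 2000000


/-- The `s`-dimensional Hausdorff measure of a closed tube of chords, not containing a
diameter and bounded by parallel chords subtending arcs of length `γ > 0` on each side,
is `0` for `s > 2`, `γ²` for `s = 2`, `∞` for `0 < s < 2`, and the Hausdorff dimension
of the tube is `2`.  The tube is bounded by the parallel chords with endpoints
`pt R α, pt R (-α)` and `pt R (α + γ/R), pt R (-(α + γ/R))`. -/
theorem hausdorffMeasure_closedTube (R γ α : ℝ) (hR : 0 < R) (hγ : 0 < γ) (hα : 0 < α)
    (hno_diam : α + γ / R < π / 2) :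
    (∀ s : ℝ, 2 < s → μH[s] {χ : Chords R |
        ∃ u ∈ Set.Icc α (α + γ / R), ∃ v ∈ Set.Icc (-(α + γ / R)) (-α),
          (χ.1 : Set ℂ) = segment ℝ (pt R u) (pt R v)} = 0) ∧
    μH[2] {χ : Chords R |
        ∃ u ∈ Set.Icc α (α + γ / R), ∃ v ∈ Set.Icc (-(α + γ / R)) (-α),
          (χ.1 : Set ℂ) = segment ℝ (pt R u) (pt R v)} = ENNReal.ofReal (γ ^ 2) ∧
    (∀ s : ℝ, 0 < s → s < 2 → μH[s] {χ : Chords R |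
        ∃ u ∈ Set.Icc α (α + γ / R), ∃ v ∈ Set.Icc (-(α + γ / R)) (-α),
          (χ.1 : Set ℂ) = segment ℝ (pt R u) (pt R v)} = ⊤) ∧
    dimH {χ : Chords R |
        ∃ u ∈ Set.Icc α (α + γ / R), ∃ v ∈ Set.Icc (-(α + γ / R)) (-α),
          (χ.1 : Set ℂ) = segment ℝ (pt R u) (pt R v)} = 2 := by
  have hπ := Real.pi_pos
  set L : ℝ := γ / R with hLdef
  have hL : 0 < L := div_pos hγ hR
  set β : ℝ := α + L with hβdef
  have hαβ : α < β := by rw [hβdef]; linarith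
  have hβπ : β < π / 2 := hno_diam
  have hLπ : L < π / 2 := by rw [hβdef] at hβπ; linarith
  have hRL : R * L = γ := by rw [hLdef]; field_simp
  -- clamping maps
  set c₁ : ℝ → ℝ := fun x => min (max x α) β with hc₁def
  set c₂ : ℝ → ℝ := fun x => min (max x (-β)) (-α) with hc₂def
  have hc₁mem : ∀ x, c₁ x ∈ Set.Icc α β := fun x =>
    ⟨le_min (le_max_right _ _) hαβ.le, min_le_right _ _⟩
  have hc₂mem : ∀ x, c₂ x ∈ Set.Icc (-β) (-α) := fun x =>
    ⟨le_min (le_max_right _ _) (by linarith), min_le_right _ _⟩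
  have hc₁id : ∀ x ∈ Set.Icc α β, c₁ x = x := fun x hx => by
    rw [hc₁def]; simp only []; rw [max_eq_left hx.1, min_eq_left hx.2]
  have hc₂id : ∀ x ∈ Set.Icc (-β) (-α), c₂ x = x := fun x hx => by
    rw [hc₂def]; simp only []; rw [max_eq_left hx.1, min_eq_left hx.2]
  have hclip : ∀ a b x y : ℝ, |min (max x a) b - min (max y a) b| ≤ |x - y| := by
    intro a b x y
    calc |min (max x a) b - min (max y a) b|
        ≤ max |max x a - max y a| |b - b| := abs_min_sub_min_le_max _ _ _ _
      _ ≤ |x - y| := by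
          rw [sub_self, abs_zero]
          exact max_le (abs_max_sub_max_le_abs _ _ _) (abs_nonneg _)
  -- the parametrization
  have hsub : ∀ u ∈ Set.Icc α β, ∀ v ∈ Set.Icc (-β) (-α), 0 < u - v ∧ u - v < 2 * π := by
    rintro u ⟨hu1, hu2⟩ v ⟨hv1, hv2⟩
    constructor <;> linarith
  set Φ : ℝ × ℝ → Chords R := fun p =>
    chordMk R hR (c₁ p.1) (c₂ p.2)
      (hsub _ (hc₁mem p.1) _ (hc₂mem p.2)).1
      (hsub _ (hc₁mem p.1) _ (hc₂mem p.2)).2 with hΦdef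
  have hΦcoe : ∀ p : ℝ × ℝ, ((Φ p).1 : Set ℂ) = segment ℝ (pt R (c₁ p.1)) (pt R (c₂ p.2)) :=
    fun p => rfl
  have hdistΦ : ∀ p q : ℝ × ℝ, dist (Φ p) (Φ q) =
      max (2 * R * |Real.sin ((c₁ p.1 - c₁ q.1) / 2)|)
        (2 * R * |Real.sin ((c₂ p.2 - c₂ q.2) / 2)|) := by
    intro p q
    rw [chords_dist, hΦcoe, hΦcoe,
      hausdorffDist_segs R α β hα hβπ (hc₁mem _) (hc₁mem _) (hc₂mem _) (hc₂mem _),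
      dist_pt R hR.le, dist_pt R hR.le]
  set S : Set (ℝ × ℝ) := Set.Icc α β ×ˢ Set.Icc (-β) (-α) with hSdef
  set T : Set (Chords R) := {χ : Chords R |
      ∃ u ∈ Set.Icc α β, ∃ v ∈ Set.Icc (-β) (-α),
        (χ.1 : Set ℂ) = segment ℝ (pt R u) (pt R v)} with hTdef
  have hT : T = Φ '' S := by
    ext χ
    constructor
    · rintro ⟨u, hu, v, hv, hseg⟩
      refine ⟨(u, v), ⟨hu, hv⟩, ?_⟩
      apply Subtype.ext
      apply TopologicalSpace.NonemptyCompacts.ext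
      rw [hΦcoe, hc₁id u hu, hc₂id v hv, hseg]
    · rintro ⟨p, ⟨hp1, hp2⟩, rfl⟩
      exact ⟨c₁ p.1, hc₁mem _, c₂ p.2, hc₂mem _, rfl⟩
  -- Lipschitz bound for Φ
  have hΦdistle : ∀ p q : ℝ × ℝ, dist (Φ p) (Φ q) ≤ R * dist p q := by
    intro p q
    rw [hdistΦ]
    have key : ∀ x y : ℝ, |x - y| ≤ dist p q →
        2 * R * |Real.sin ((x - y) / 2)| ≤ R * dist p q := by
      intro x y hxy
      have h1 : |Real.sin ((x - y) / 2)| ≤ |(x - y) / 2| := Real.abs_sin_le_abs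
      have h2 : |(x - y) / 2| = |x - y| / 2 := by rw [abs_div]; norm_num
      nlinarith [abs_nonneg (x - y)]
    apply max_le
    · apply key
      calc |c₁ p.1 - c₁ q.1| ≤ |p.1 - q.1| := hclip _ _ _ _
        _ ≤ dist p q := by rw [Prod.dist_eq, Real.dist_eq]; exact le_max_left _ _
    · apply key
      calc |c₂ p.2 - c₂ q.2| ≤ |p.2 - q.2| := hclip _ _ _ _
        _ ≤ dist p q := by rw [Prod.dist_eq, Real.dist_eq]; exact le_max_right _ _
  have hΦlip : LipschitzWith (Real.toNNReal R) Φ :=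
    LipschitzWith.of_dist_le_mul fun p q => by
      rw [Real.coe_toNNReal R hR.le]; exact hΦdistle p q
  -- reverse inequality
  have hrev : ∀ c : ℝ, 0 < c → c ≤ L / 2 → ∀ p ∈ S, ∀ q ∈ S,
      |p.1 - q.1| ≤ 2 * c → |p.2 - q.2| ≤ 2 * c →
      dist p q ≤ c / (R * Real.sin c) * dist (Φ p) (Φ q) := by
    intro c hc hcL p hp q hq h1 h2
    have hcπ : c < π / 2 := by linarith
    have hsc : 0 < Real.sin c := Real.sin_pos_of_pos_of_lt_pi hc (by linarith)
    rw [Prod.dist_eq]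
    have key : ∀ x y : ℝ, |x - y| ≤ 2 * c →
        2 * R * |Real.sin ((x - y) / 2)| ≤ dist (Φ p) (Φ q) →
        dist x y ≤ c / (R * Real.sin c) * dist (Φ p) (Φ q) := by
      intro x y hxy hle
      rw [Real.dist_eq]
      have habs : |Real.sin ((x - y) / 2)| = Real.sin (|x - y| / 2) :=
        abs_sin_half _ (by linarith [abs_nonneg (x - y)])
      have hcon : (|x - y| / 2) * Real.sin c ≤ c * Real.sin (|x - y| / 2) :=
        sin_concave_lb hc (by linarith) (by positivity) (by linarith)
      rw [habs] at hle
      rw [div_mul_eq_mul_div, le_div_iff₀ (by positivity)]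
      nlinarith [dist_nonneg (x := Φ p) (y := Φ q)]
    apply max_le
    · apply key p.1 q.1 h1
      rw [hdistΦ, hc₁id p.1 hp.1, hc₁id q.1 hq.1]
      exact le_max_left _ _
    · apply key p.2 q.2 h2
      rw [hdistΦ, hc₂id p.2 hp.2, hc₂id q.2 hq.2]
      exact le_max_right _ _
  have hSperm : ∀ p ∈ S, ∀ q ∈ S, |p.1 - q.1| ≤ 2 * (L / 2) ∧ |p.2 - q.2| ≤ 2 * (L / 2) := by
    have hβL : β = α + L := hβdef
    rintro p ⟨hp1, hp2⟩ q ⟨hq1, hq2⟩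
    simp only [Set.mem_Icc] at hp1 hp2 hq1 hq2
    refine ⟨abs_le.mpr ⟨by linarith [hp1.1, hq1.2], by linarith [hp1.2, hq1.1]⟩,
      abs_le.mpr ⟨by linarith [hp2.1, hq2.2], by linarith [hp2.2, hq2.1]⟩⟩
  -- injectivity on S
  have hinj : Set.InjOn Φ S := by
    intro p hp q hq h
    have h12 := hSperm p hp q hq
    have := hrev (L/2) (by positivity) le_rfl p hp q hq h12.1 h12.2
    rw [h, dist_self, mul_zero] at this
    exact dist_le_zero.mp this
  -- the inverse map
  set Ψ : Chords R → ℝ × ℝ := Function.invFunOn Φ S with hΨdef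
  have hΨΦ : ∀ p ∈ S, Ψ (Φ p) = p := fun p hp => hinj.leftInvOn_invFunOn hp
  have hΨimg : ∀ t : Set (ℝ × ℝ), t ⊆ S → Ψ '' (Φ '' t) = t := fun t ht =>
    hinj.invFunOn_image ht
  have hΨlipOn : ∀ c : ℝ, 0 < c → c ≤ L / 2 →
      ∀ t : Set (ℝ × ℝ), t ⊆ S →
      (∀ p ∈ t, ∀ q ∈ t, |p.1 - q.1| ≤ 2 * c ∧ |p.2 - q.2| ≤ 2 * c) →
      LipschitzOnWith (Real.toNNReal (c / (R * Real.sin c))) Ψ (Φ '' t) := by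
    intro c hc hcL t ht hdiam
    have hcπ : c < π / 2 := by linarith
    have hsc : 0 < Real.sin c := Real.sin_pos_of_pos_of_lt_pi hc (by linarith)
    rw [lipschitzOnWith_iff_dist_le_mul]
    rintro x ⟨p, hp, rfl⟩ y ⟨q, hq, rfl⟩
    rw [hΨΦ p (ht hp), hΨΦ q (ht hq), Real.coe_toNNReal _ (by positivity)]
    exact hrev c hc hcL p (ht hp) q (ht hq) (hdiam p hp q hq).1 (hdiam p hp q hq).2
  -- measure of the parameter square
  have hvolS : μH[(2:ℝ)] S = ENNReal.ofReal L * ENNReal.ofReal L := by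
    rw [hausdorffMeasure_prod_real, hSdef, MeasureTheory.Measure.volume_eq_prod,
      MeasureTheory.Measure.prod_prod, Real.volume_Icc, Real.volume_Icc]
    congr 2 <;> rw [hβdef] <;> ring
  have hS2netop : μH[(2:ℝ)] S ≠ ∞ := by
    rw [hvolS]; exact ENNReal.mul_ne_top ENNReal.ofReal_ne_top ENNReal.ofReal_ne_top
  have hS2nezero : μH[(2:ℝ)] S ≠ 0 := by
    rw [hvolS]
    simp only [ne_eq, mul_eq_zero, not_or]
    exact ⟨(ENNReal.ofReal_pos.mpr hL).ne', (ENNReal.ofReal_pos.mpr hL).ne'⟩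
  -- upper bound
  have hupper : μH[(2:ℝ)] T ≤ ENNReal.ofReal (γ ^ 2) := by
    rw [hT]
    calc μH[(2:ℝ)] (Φ '' S) ≤ (Real.toNNReal R : ℝ≥0∞) ^ (2:ℝ) * μH[(2:ℝ)] S :=
        hΦlip.hausdorffMeasure_image_le (by norm_num) S
      _ = ENNReal.ofReal (γ ^ 2) := by
        rw [hvolS, show (2:ℝ) = ((2:ℕ):ℝ) by norm_num, ENNReal.rpow_natCast,
          show ((Real.toNNReal R : ℝ≥0∞)) = ENNReal.ofReal R from rfl, pow_two,
          ← ENNReal.ofReal_mul hR.le, ← ENNReal.ofReal_mul hL.le,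
          ← ENNReal.ofReal_mul (by positivity)]
        congr 1
        rw [← hRL]; ring
  -- lower bound for each n
  have hlower : ∀ n : ℕ, 1 ≤ n →
      ENNReal.ofReal ((2 * R * ((n:ℝ) * Real.sin (L / 2 / n))) ^ 2) ≤ μH[(2:ℝ)] T := by
    intro n hn
    have hn0 : (0:ℝ) < n := by exact_mod_cast hn
    set d : ℝ := L / n with hddef
    have hd : 0 < d := by positivity
    have hnd : (n:ℝ) * d = L := by rw [hddef]; field_simp
    set cn : ℝ := d / 2 with hcndef
    have hcd : L / 2 / n = cn := by rw [hcndef, hddef]; ring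
    have hcn : 0 < cn := by positivity
    have hcnL : cn ≤ L / 2 := by
      rw [hcndef, hddef]
      have h1 : L / (n:ℝ) ≤ L := div_le_self hL.le (by exact_mod_cast hn)
      linarith
    have hscn : 0 < Real.sin cn := Real.sin_pos_of_pos_of_lt_pi hcn (by linarith)
    set B : Fin n × Fin n → Set (ℝ × ℝ) := fun jk =>
      Set.Ico (α + jk.1.val * d) (α + (jk.1.val + 1) * d) ×ˢ
        Set.Ico (-β + jk.2.val * d) (-β + (jk.2.val + 1) * d) with hBdef
    set Bc : Fin n × Fin n → Set (ℝ × ℝ) := fun jk =>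
      Set.Icc (α + jk.1.val * d) (α + (jk.1.val + 1) * d) ×ˢ
        Set.Icc (-β + jk.2.val * d) (-β + (jk.2.val + 1) * d) with hBcdef
    have hβL : β = α + L := hβdef
    have hIccSub : ∀ (m : Fin n) (a : ℝ), Set.Icc (a + m.val * d) (a + (m.val + 1) * d)
        ⊆ Set.Icc a (a + L) := by
      intro m a x hx
      have hm1 : ((m.val : ℝ) + 1) ≤ n := by exact_mod_cast m.isLt
      obtain ⟨h1, h2⟩ := hx
      have hmd : 0 ≤ (m.val : ℝ) * d := by positivity
      constructor
      · linarith
      · nlinarith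
    have hBcS : ∀ jk, Bc jk ⊆ S := by
      rintro ⟨j, k⟩ p ⟨h1, h2⟩
      constructor
      · have := hIccSub j α h1; rwa [← hβL] at this
      · have := hIccSub k (-β) h2
        have he : -β + L = -α := by rw [hβL]; ring
        rwa [he] at this
    have hBBc : ∀ jk, B jk ⊆ Bc jk := fun jk =>
      Set.prod_mono Set.Ico_subset_Icc_self Set.Ico_subset_Icc_self
    have hBS : ∀ jk, B jk ⊆ S := fun jk => (hBBc jk).trans (hBcS jk)
    -- disjointness
    have hIcoDisj : ∀ (a : ℝ) (j j' : ℕ), j ≠ j' →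
        Disjoint (Set.Ico (a + j * d) (a + (j + 1) * d))
          (Set.Ico (a + j' * d) (a + (j' + 1) * d)) := by
      intro a j j' hjj'
      rw [Set.disjoint_left]
      rintro x ⟨h1, h2⟩ ⟨h3, h4⟩
      have h5 : (j:ℝ) * d < ((j':ℝ) + 1) * d := by linarith
      have h6 : (j':ℝ) * d < ((j:ℝ) + 1) * d := by linarith
      have h7 : (j:ℝ) < (j':ℝ) + 1 := by
        by_contra hcon; push_neg at hcon; nlinarith
      have h8 : (j':ℝ) < (j:ℝ) + 1 := by
        by_contra hcon; push_neg at hcon; nlinarith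
      have h9 : j < j' + 1 := by exact_mod_cast h7
      have h10 : j' < j + 1 := by exact_mod_cast h8
      omega
    have hBdisj : Pairwise (Function.onFun Disjoint fun jk : Fin n × Fin n => Φ '' B jk) := by
      rintro ⟨j, k⟩ ⟨j', k'⟩ hne
      rw [Function.onFun, Set.disjoint_left]
      rintro x ⟨p, hp, rfl⟩ ⟨q, hq, hqe⟩
      have hpq : q = p := hinj (hBS _ hq) (hBS _ hp) hqe
      rw [hpq] at hq
      have hj : j = j' := by
        by_contra hjj
        exact Set.disjoint_left.mp
          (hIcoDisj α j.val j'.val (fun h => hjj (Fin.ext h))) hp.1 hq.1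
      have hk : k = k' := by
        by_contra hkk
        exact Set.disjoint_left.mp
          (hIcoDisj (-β) k.val k'.val (fun h => hkk (Fin.ext h))) hp.2 hq.2
      exact hne (by rw [hj, hk])
    -- measurability
    have hΦcont : Continuous Φ := hΦlip.continuous
    have hBmeas : ∀ jk, MeasurableSet (Φ '' B jk) := by
      intro jk
      have hcpt1 : IsCompact (Bc jk) := isCompact_Icc.prod isCompact_Icc
      have hedge : IsCompact (Bc jk \ B jk) := by
        have hclosed : IsClosed {p : ℝ × ℝ |
            p.1 = α + (jk.1.val + 1) * d ∨ p.2 = -β + (jk.2.val + 1) * d} :=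
          (isClosed_eq continuous_fst continuous_const).union
            (isClosed_eq continuous_snd continuous_const)
        have heq : Bc jk \ B jk = Bc jk ∩ {p : ℝ × ℝ |
            p.1 = α + (jk.1.val + 1) * d ∨ p.2 = -β + (jk.2.val + 1) * d} := by
          ext ⟨x, y⟩
          simp only [Set.mem_diff, Set.mem_inter_iff, Set.mem_setOf_eq, hBdef, hBcdef,
            Set.mem_prod, Set.mem_Icc, Set.mem_Ico]
          constructor
          · rintro ⟨⟨⟨hx1, hx2⟩, hy1, hy2⟩, hnot⟩
            refine ⟨⟨⟨hx1, hx2⟩, hy1, hy2⟩, ?_⟩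
            by_contra hc
            push_neg at hc
            exact hnot ⟨⟨hx1, lt_of_le_of_ne hx2 hc.1⟩, ⟨hy1, lt_of_le_of_ne hy2 hc.2⟩⟩
          · rintro ⟨hm, hor⟩
            refine ⟨hm, ?_⟩
            rintro ⟨⟨_, hx⟩, _, hy⟩
            rcases hor with h | h
            · rw [h] at hx; exact lt_irrefl _ hx
            · rw [h] at hy; exact lt_irrefl _ hy
        rw [heq]
        exact hcpt1.inter_right hclosed
      have himg : Φ '' B jk = (Φ '' Bc jk) \ (Φ '' (Bc jk \ B jk)) := by
        ext x
        constructor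
        · rintro ⟨p, hp, rfl⟩
          refine ⟨⟨p, hBBc _ hp, rfl⟩, ?_⟩
          rintro ⟨q, hq, hqe⟩
          have hq' : q = p := hinj (hBcS _ hq.1) (hBS _ hp) hqe
          rw [hq'] at hq
          exact hq.2 hp
        · rintro ⟨⟨p, hp, rfl⟩, hnot⟩
          by_cases hpB : p ∈ B jk
          · exact ⟨p, hpB, rfl⟩
          · exact absurd ⟨p, ⟨hp, hpB⟩, rfl⟩ hnot
      rw [himg]
      exact ((hcpt1.image hΦcont).measurableSet).diff ((hedge.image hΦcont).measurableSet)
    -- per-piece lower bound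
    set K : ℝ≥0 := Real.toNNReal (cn / (R * Real.sin cn)) with hKdef
    have hKpos : (0:ℝ) < cn / (R * Real.sin cn) := by positivity
    have hKco : (K : ℝ≥0∞) ^ (2:ℝ) = ENNReal.ofReal ((cn / (R * Real.sin cn)) ^ 2) := by
      rw [show (2:ℝ) = ((2:ℕ):ℝ) by norm_num, ENNReal.rpow_natCast, hKdef,
        show ((Real.toNNReal (cn / (R * Real.sin cn)) : ℝ≥0∞))
          = ENNReal.ofReal (cn / (R * Real.sin cn)) from rfl,
        pow_two, ← ENNReal.ofReal_mul hKpos.le, ← pow_two]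
    have hpiece : ∀ jk, ENNReal.ofReal (4 * R ^ 2 * Real.sin cn ^ 2) ≤ μH[(2:ℝ)] (Φ '' B jk) := by
      intro jk
      have hvolB : μH[(2:ℝ)] (B jk) = ENNReal.ofReal d * ENNReal.ofReal d := by
        rw [hausdorffMeasure_prod_real, hBdef]
        simp only []
        rw [MeasureTheory.Measure.volume_eq_prod, MeasureTheory.Measure.prod_prod,
          Real.volume_Ico, Real.volume_Ico]
        congr 2 <;> ring
      have hdiam : ∀ p ∈ B jk, ∀ q ∈ B jk,
          |p.1 - q.1| ≤ 2 * cn ∧ |p.2 - q.2| ≤ 2 * cn := by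
        rintro p ⟨hp1, hp2⟩ q ⟨hq1, hq2⟩
        have h2cn : 2 * cn = d := by rw [hcndef]; ring
        rw [h2cn]
        obtain ⟨hp11, hp12⟩ := hp1
        obtain ⟨hp21, hp22⟩ := hp2
        obtain ⟨hq11, hq12⟩ := hq1
        obtain ⟨hq21, hq22⟩ := hq2
        exact ⟨abs_le.mpr ⟨by linarith, by linarith⟩, abs_le.mpr ⟨by linarith, by linarith⟩⟩
      have hΨB := hΨlipOn cn hcn hcnL (B jk) (hBS jk) hdiam
      have hle := hΨB.hausdorffMeasure_image_le (d := (2:ℝ)) (by norm_num)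
      rw [hΨimg (B jk) (hBS jk)] at hle
      have h0 : ((K:ℝ≥0∞) ^ (2:ℝ)) ≠ 0 := by
        rw [hKco]; exact (ENNReal.ofReal_pos.mpr (by positivity)).ne'
      have htop : ((K:ℝ≥0∞) ^ (2:ℝ)) ≠ ∞ := by
        rw [hKco]; exact ENNReal.ofReal_ne_top
      apply (ENNReal.mul_le_mul_iff_right h0 htop).mp
      have hprod : (K:ℝ≥0∞) ^ (2:ℝ) * ENNReal.ofReal (4 * R ^ 2 * Real.sin cn ^ 2)
          = ENNReal.ofReal d * ENNReal.ofReal d := by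
        rw [hKco, ← ENNReal.ofReal_mul (by positivity), ← ENNReal.ofReal_mul hd.le]
        congr 1
        rw [show d = 2 * cn by rw [hcndef]; ring]
        field_simp
        ring
      rw [hprod, ← hvolB]
      exact hle
    -- summation
    have hUsub : (⋃ jk : Fin n × Fin n, Φ '' B jk) ⊆ T := by
      rw [hT]
      exact Set.iUnion_subset fun jk => Set.image_mono (hBS jk)
    have hUnion : μH[(2:ℝ)] (⋃ jk : Fin n × Fin n, Φ '' B jk)
        = ∑' jk : Fin n × Fin n, μH[(2:ℝ)] (Φ '' B jk) :=
      MeasureTheory.measure_iUnion hBdisj hBmeas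
    calc ENNReal.ofReal ((2 * R * ((n:ℝ) * Real.sin (L / 2 / n))) ^ 2)
        = ((n * n : ℕ) : ℝ≥0∞) * ENNReal.ofReal (4 * R ^ 2 * Real.sin cn ^ 2) := by
          rw [hcd, show (2 * R * ((n:ℝ) * Real.sin cn)) ^ 2
              = ((n:ℝ) * (n:ℝ)) * (4 * R ^ 2 * Real.sin cn ^ 2) by ring,
            ENNReal.ofReal_mul (by positivity),
            show ((n:ℝ) * (n:ℝ)) = (((n * n : ℕ)):ℝ) by push_cast; ring,
            ENNReal.ofReal_natCast]
      _ = ∑' _jk : Fin n × Fin n, ENNReal.ofReal (4 * R ^ 2 * Real.sin cn ^ 2) := by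
          rw [tsum_fintype]
          rw [Finset.sum_const, Finset.card_univ, Fintype.card_prod, Fintype.card_fin,
            nsmul_eq_mul]
      _ ≤ ∑' jk : Fin n × Fin n, μH[(2:ℝ)] (Φ '' B jk) := ENNReal.tsum_le_tsum hpiece
      _ = μH[(2:ℝ)] (⋃ jk : Fin n × Fin n, Φ '' B jk) := hUnion.symm
      _ ≤ μH[(2:ℝ)] T := measure_mono hUsub
  -- the limit
  have htendγ : Filter.Tendsto
      (fun n : ℕ => ENNReal.ofReal ((2 * R * ((n:ℝ) * Real.sin (L / 2 / n))) ^ 2))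
      Filter.atTop (𝓝 (ENNReal.ofReal (γ ^ 2))) := by
    have h1 : Filter.Tendsto (fun n : ℕ => 2 * R * ((n:ℝ) * Real.sin (L / 2 / n)))
        Filter.atTop (𝓝 (2 * R * (L / 2))) :=
      (tendsto_nat_mul_sin (L / 2) (by positivity)).const_mul (2 * R)
    have h2 := h1.pow 2
    rw [show (2 * R * (L / 2)) ^ 2 = γ ^ 2 by rw [← hRL]; ring] at h2
    exact ENNReal.tendsto_ofReal h2
  have hμ2 : μH[(2:ℝ)] T = ENNReal.ofReal (γ ^ 2) := by
    refine le_antisymm hupper ?_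
    exact le_of_tendsto htendγ (Filter.eventually_atTop.mpr ⟨1, hlower⟩)
  refine ⟨?_, ?_, ?_, ?_⟩
  · -- s > 2
    intro s hs
    have h0 : μH[s] S = 0 :=
      (MeasureTheory.Measure.hausdorffMeasure_zero_or_top (show (2:ℝ) < s from hs) S).resolve_right hS2netop
    rw [hT]
    refine le_antisymm ?_ zero_le
    calc μH[s] (Φ '' S) ≤ (Real.toNNReal R : ℝ≥0∞) ^ s * μH[s] S :=
        hΦlip.hausdorffMeasure_image_le (by linarith) S
      _ = 0 := by rw [h0, mul_zero]
  · exact hμ2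
  · -- s < 2
    intro s hs0 hs2
    have hStop : μH[s] S = ∞ :=
      (MeasureTheory.Measure.hausdorffMeasure_zero_or_top (show s < (2:ℝ) from hs2) S).resolve_left hS2nezero
    have hΨS := hΨlipOn (L / 2) (by positivity) le_rfl S subset_rfl hSperm
    have hle := hΨS.hausdorffMeasure_image_le (d := s) hs0.le
    rw [hΨimg S subset_rfl, hStop] at hle
    rw [hT]
    by_contra hne
    have hfin : ((Real.toNNReal (L / 2 / (R * Real.sin (L / 2))) : ℝ≥0∞)) ^ s
        * μH[s] (Φ '' S) ≠ ⊤ :=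
      ENNReal.mul_ne_top (ENNReal.rpow_ne_top_of_nonneg hs0.le ENNReal.coe_ne_top) hne
    exact hfin (top_le_iff.mp hle)
  · -- dimension
    have h2 : ((2:ℝ≥0) : ℝ) = (2:ℝ) := by norm_num
    have := dimH_of_hausdorffMeasure_ne_zero_ne_top (d := (2:ℝ≥0)) (s := T)
      (by rw [h2, hμ2]; exact (ENNReal.ofReal_pos.mpr (by positivity)).ne')
      (by rw [h2, hμ2]; exact ENNReal.ofReal_ne_top)
    rw [this]
    norm_num
end
end

section
/- Under the probability measure Pr(A) = H²(A) / H²(X) on the space X of chords of a circle of radius R (where H² is the 2-dimensional Hausdorff measure induced by the Hausdorff metric on chords), the probability that a random chord is longer than the side √3·R of the inscribed equilateral triangle equals 1/3. -/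
open Metric Real MeasureTheory
open scoped ENNReal NNReal

noncomputable section

open Filter
open scoped Topology

namespace Bertrand


lemma abs_pt {R : ℝ} (hR : 0 ≤ R) (θ : ℝ) : ‖pt R θ‖ = R := by
  simp [pt, Complex.norm_exp_ofReal_mul_I, abs_of_nonneg hR]

lemma pt_mem_sphere {R : ℝ} (hR : 0 ≤ R) (θ : ℝ) : pt R θ ∈ Metric.sphere (0 : ℂ) R := by
  simp [Complex.dist_eq, abs_pt hR]

lemma exp_sub_exp (x : ℂ) : Complex.exp (x * Complex.I) - Complex.exp (-x * Complex.I)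
      = 2 * Complex.I * Complex.sin x := by
  rw [Complex.sin]
  field_simp
  ring_nf
  rw [Complex.I_sq]
  ring

lemma pt_sub_pt (R a b : ℝ) :
    pt R a - pt R b = R * (2 * Complex.I * Complex.sin (((a - b)/2 : ℝ)) *
      Complex.exp ((((a + b)/2 : ℝ)) * Complex.I)) := by
  have key : Complex.exp ((a : ℂ) * Complex.I) - Complex.exp ((b : ℂ) * Complex.I)
      = (Complex.exp ((((a - b)/2 : ℝ)) * Complex.I) -
          Complex.exp ((-((a - b)/2 : ℝ)) * Complex.I)) *
        Complex.exp ((((a + b)/2 : ℝ)) * Complex.I) := by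
    rw [sub_mul, ← Complex.exp_add, ← Complex.exp_add]
    push_cast
    ring_nf
  calc pt R a - pt R b = R * (Complex.exp ((a:ℂ) * Complex.I) - Complex.exp ((b:ℂ)*Complex.I)) := by
        simp only [pt]; ring
    _ = _ := by rw [key, exp_sub_exp (((a - b)/2 : ℝ) : ℂ)]

lemma dist_pt_pt {R : ℝ} (hR : 0 ≤ R) (a b : ℝ) :
    dist (pt R a) (pt R b) = 2 * R * |Real.sin ((a - b)/2)| := by
  have h1 : ‖(Complex.exp ((((a + b)/2 : ℝ)) * Complex.I))‖ = 1 :=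
    Complex.norm_exp_ofReal_mul_I _
  have h2 : ‖(Complex.sin (((a - b)/2 : ℝ)))‖ = |Real.sin ((a - b)/2)| := by
    rw [← Complex.ofReal_sin, Complex.norm_real, Real.norm_eq_abs]
  rw [Complex.dist_eq, pt_sub_pt, norm_mul, norm_mul, norm_mul, norm_mul, h1, h2,
    Complex.norm_real, Real.norm_eq_abs, Complex.norm_two, Complex.norm_I, abs_of_nonneg hR]
  ring




lemma hre (R σ θ : ℝ) :
    ((pt R θ) * (starRingEnd ℂ) (-Complex.I * Complex.exp ((σ:ℂ) * Complex.I))).re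
      = -(R * Real.sin (θ - σ)) := by
  simp [pt, Complex.exp_mul_I, ← Complex.ofReal_cos, ← Complex.ofReal_sin,
    Complex.mul_re, Complex.mul_im, Real.sin_sub]
  ring

lemma cert {R : ℝ} (hR : 0 ≤ R) (x u v σ : ℝ) {y : ℂ}
    (hy : y ∈ segment ℝ (pt R u) (pt R v)) :
    R * min (Real.sin (u - σ) - Real.sin (x - σ)) (Real.sin (v - σ) - Real.sin (x - σ))
      ≤ dist (pt R x) y := by
  obtain ⟨a, b, ha, hb, hab, rfl⟩ := hy
  set w : ℂ := -Complex.I * Complex.exp ((σ:ℂ) * Complex.I) with hw_def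
  have hw : ‖w‖ = 1 := by
    rw [hw_def, norm_mul]
    simp [Complex.norm_exp_ofReal_mul_I]
  have hle : ((pt R x - (a • pt R u + b • pt R v)) * (starRingEnd ℂ) w).re
      ≤ dist (pt R x) (a • pt R u + b • pt R v) := by
    calc ((pt R x - (a • pt R u + b • pt R v)) * (starRingEnd ℂ) w).re
        ≤ ‖((pt R x - (a • pt R u + b • pt R v)) * (starRingEnd ℂ) w)‖ :=
          Complex.re_le_norm _
      _ = ‖(pt R x - (a • pt R u + b • pt R v))‖ * ‖((starRingEnd ℂ) w)‖ :=
          norm_mul _ _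
      _ = dist (pt R x) (a • pt R u + b • pt R v) := by
          rw [Complex.norm_conj, hw, mul_one, Complex.dist_eq]
  refine le_trans ?_ hle
  have expand : ((pt R x - (a • pt R u + b • pt R v)) * (starRingEnd ℂ) w).re
      = -(R * Real.sin (x - σ)) - (a * -(R * Real.sin (u - σ)) + b * -(R * Real.sin (v - σ))) := by
    rw [sub_mul, add_mul, smul_mul_assoc, smul_mul_assoc, Complex.sub_re, Complex.add_re,
      Complex.smul_re, Complex.smul_re, hre, hre, hre]
    simp [smul_eq_mul]
  rw [expand]
  set s1 := Real.sin (u - σ) - Real.sin (x - σ) with hs1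
  set s2 := Real.sin (v - σ) - Real.sin (x - σ) with hs2
  have ha' : a = 1 - b := by linarith
  have hRHS : -(R * Real.sin (x - σ)) - (a * -(R * Real.sin (u - σ)) + b * -(R * Real.sin (v - σ)))
      = (1 - b) * (R * s1) + b * (R * s2) := by
    rw [ha', hs1, hs2]; ring
  rw [hRHS]
  have hb1 : (0:ℝ) ≤ 1 - b := by linarith
  rcases min_cases s1 s2 with ⟨hmin, hcmp⟩ | ⟨hmin, hcmp⟩ <;> rw [hmin]
  · nlinarith [mul_nonneg hb (mul_nonneg hR (sub_nonneg.2 hcmp))]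
  · nlinarith [mul_nonneg hb1 (mul_nonneg hR (sub_nonneg.2 (le_of_lt hcmp)))]




lemma isCompact_seg (x y : ℂ) : IsCompact (segment ℝ x y) := by
  rw [segment_eq_image ℝ x y]
  exact isCompact_Icc.image (by continuity)

lemma helper1 {r x : ℝ} (hr0 : 0 ≤ r) (hr : r ≤ π/2) (h1 : r ≤ x) (h2 : x ≤ π - r) :
    Real.sin r ≤ Real.sin x := by
  rcases le_total x (π/2) with hx | hx
  · exact Real.strictMonoOn_sin.monotoneOn ⟨by linarith, hr⟩ ⟨by linarith, hx⟩ h1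
  · rw [← Real.sin_pi_sub x]
    exact Real.strictMonoOn_sin.monotoneOn ⟨by linarith, hr⟩ ⟨by linarith, by linarith⟩
      (by linarith)

lemma helper2 {r g : ℝ} (hr0 : 0 ≤ r) (hr : r ≤ π/2) (hg1 : π - 2*r ≤ g) (hg2 : g ≤ π) :
    Real.sin r ≤ Real.cos (g/2) - Real.cos (g/2 + r) := by
  have hid : Real.cos (g/2) - Real.cos (g/2 + r)
      = 2 * Real.sin (g/2 + r/2) * Real.sin (r/2) := by
    rw [Real.cos_sub_cos]
    ring_nf
    rw [show (r*(-1/2) : ℝ) = -(r*(1/2)) by ring, Real.sin_neg]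
    ring
  rw [hid]
  have h2 : Real.cos (g/2 + r/2 - π/2) = Real.sin (g/2 + r/2) := by
    rw [Real.cos_sub_pi_div_two]
  have habs : |g/2 + r/2 - π/2| ≤ r/2 := by
    rw [abs_le]; constructor <;> [linarith; linarith]
  have hcos : Real.cos (r/2) ≤ Real.cos (g/2 + r/2 - π/2) := by
    rw [← Real.cos_abs (g/2 + r/2 - π/2)]
    apply Real.cos_le_cos_of_nonneg_of_le_pi (abs_nonneg _) (by linarith)
    exact habs.trans (by linarith)
  have hsin2 : 0 ≤ Real.sin (r/2) := Real.sin_nonneg_of_nonneg_of_le_pi (by linarith) (by linarith)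
  have hsr : Real.sin r = 2 * Real.sin (r/2) * Real.cos (r/2) := by
    rw [show r = 2 * (r/2) by ring, Real.sin_two_mul]
    norm_num
  rw [hsr, h2] at *
  nlinarith [hsin2, hcos]

lemma le_hausdorffDist_segs {R : ℝ} {x u v a b : ℝ} (c : ℝ)
    (hx : pt R x ∈ segment ℝ (pt R a) (pt R b))
    (h : ∀ y ∈ segment ℝ (pt R u) (pt R v), c ≤ dist (pt R x) y) :
    c ≤ hausdorffDist (segment ℝ (pt R a) (pt R b)) (segment ℝ (pt R u) (pt R v)) := by
  have hne : (segment ℝ (pt R u) (pt R v)).Nonempty := ⟨_, left_mem_segment _ _ _⟩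
  have hinf : c ≤ infDist (pt R x) (segment ℝ (pt R u) (pt R v)) := by
    by_contra hlt
    push_neg at hlt
    obtain ⟨y, hy, hd⟩ := (infDist_lt_iff hne).1 hlt
    exact absurd (h y hy) (not_le.2 hd)
  refine hinf.trans (infDist_le_hausdorffDist_of_mem hx ?_)
  exact Metric.hausdorffEdist_ne_top_of_nonempty_of_bounded ⟨_, hx⟩ hne
    (isCompact_seg _ _).isBounded (isCompact_seg _ _).isBounded

lemma auxA {R : ℝ} (hR : 0 ≤ R) {a' b' : ℝ} (x : ℝ) (h1 : 0 ≤ b' - a') (h2 : b' - a' ≤ π)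
    {y : ℂ} (hy : y ∈ segment ℝ (pt R a') (pt R b')) :
    R * Real.sin (a' - x) ≤ dist (pt R x) y := by
  refine le_trans ?_ (cert hR x a' b' a' hy)
  apply mul_le_mul_of_nonneg_left _ hR
  have hsx : Real.sin (a' - x) = - Real.sin (x - a') := by
    rw [show a' - x = -(x - a') by ring, Real.sin_neg]
  have hnn : 0 ≤ Real.sin (b' - a') := Real.sin_nonneg_of_nonneg_of_le_pi h1 h2
  apply le_min
  · rw [sub_self, Real.sin_zero]
    linarith
  · linarith

lemma auxB {R : ℝ} (hR : 0 ≤ R) {a b : ℝ} (x : ℝ) (h1 : 0 < b - a) (h2 : b - a ≤ π)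
    (h3 : b ≤ x) (h4 : x - b ≤ π/2)
    {y : ℂ} (hy : y ∈ segment ℝ (pt R a) (pt R b)) :
    R * Real.sin (x - b) ≤ dist (pt R x) y := by
  have hr0 : 0 ≤ x - b := by linarith
  by_cases hc : x - a ≤ π - (x - b)
  · refine le_trans ?_ (cert hR x a b (x + π) hy)
    apply mul_le_mul_of_nonneg_left _ hR
    have e1 : Real.sin (a - (x + π)) = Real.sin (x - a) := by
      rw [show a - (x + π) = (a - x) - π by ring, Real.sin_sub_pi,
        show a - x = -(x - a) by ring, Real.sin_neg, neg_neg]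
    have e2 : Real.sin (x - (x + π)) = 0 := by
      rw [show x - (x + π) = 0 - π by ring, Real.sin_sub_pi, Real.sin_zero, neg_zero]
    have e3 : Real.sin (b - (x + π)) = Real.sin (x - b) := by
      rw [show b - (x + π) = (b - x) - π by ring, Real.sin_sub_pi,
        show b - x = -(x - b) by ring, Real.sin_neg, neg_neg]
    rw [e1, e2, e3]
    apply le_min
    · rw [sub_zero]
      exact helper1 hr0 h4 (by linarith) (by linarith)
    · rw [sub_zero]
  · have hgd : π - 2*(x - b) ≤ b - a := by linarith
    refine le_trans ?_ (cert hR x a b ((a+b)/2 - π/2) hy)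
    apply mul_le_mul_of_nonneg_left _ hR
    have e1 : Real.sin (a - ((a+b)/2 - π/2)) = Real.cos ((b-a)/2) := by
      rw [show a - ((a+b)/2 - π/2) = π/2 - ((b-a)/2) by ring, Real.sin_pi_div_two_sub]
    have e2 : Real.sin (b - ((a+b)/2 - π/2)) = Real.cos ((b-a)/2) := by
      rw [show b - ((a+b)/2 - π/2) = (b-a)/2 + π/2 by ring, Real.sin_add_pi_div_two]
    have e3 : Real.sin (x - ((a+b)/2 - π/2)) = Real.cos ((b-a)/2 + (x - b)) := by
      rw [show x - ((a+b)/2 - π/2) = ((b-a)/2 + (x - b)) + π/2 by ring, Real.sin_add_pi_div_two]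
    rw [e1, e2, e3, min_self]
    have := helper2 hr0 h4 hgd h2
    linarith

lemma lowerBound {R : ℝ} (hR : 0 ≤ R) {a b a' b' : ℝ}
    (h1 : 0 < b - a) (h2 : b - a ≤ π) (h1' : 0 < b' - a') (h2' : b' - a' ≤ π)
    (hda : |a' - a| ≤ π/2) (hdb : |b' - b| ≤ π/2) :
    R * Real.sin (max |a' - a| |b' - b|) ≤
      hausdorffDist (segment ℝ (pt R a) (pt R b)) (segment ℝ (pt R a') (pt R b')) := by
  rcases max_cases |a' - a| |b' - b| with ⟨hm, hcmp⟩ | ⟨hm, hcmp⟩ <;> rw [hm]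
  · rcases le_total a a' with hs | hs
    · rw [abs_of_nonneg (by linarith : (0:ℝ) ≤ a' - a)]
      exact le_hausdorffDist_segs _ (left_mem_segment ℝ (pt R a) (pt R b))
        (fun y hy => auxA hR a (le_of_lt h1') h2' hy)
    · rw [abs_of_nonpos (by linarith : a' - a ≤ 0), show -(a' - a) = a - a' by ring]
      rw [Metric.hausdorffDist_comm]
      exact le_hausdorffDist_segs _ (left_mem_segment ℝ (pt R a') (pt R b'))
        (fun y hy => auxA hR a' (le_of_lt h1) h2 hy)
  · rcases le_total b b' with hs | hs
    · rw [abs_of_nonneg (by linarith : (0:ℝ) ≤ b' - b)]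
      rw [Metric.hausdorffDist_comm]
      refine le_hausdorffDist_segs _ (right_mem_segment ℝ (pt R a') (pt R b'))
        (fun y hy => auxB hR b' h1 h2 hs ?_ hy)
      calc b' - b ≤ |b' - b| := le_abs_self _
        _ ≤ π/2 := hdb
    · rw [abs_of_nonpos (by linarith : b' - b ≤ 0), show -(b' - b) = b - b' by ring]
      refine le_hausdorffDist_segs _ (right_mem_segment ℝ (pt R a) (pt R b))
        (fun y hy => auxB hR b h1' h2' hs ?_ hy)
      calc b - b' ≤ |b' - b| := by rw [abs_sub_comm]; exact le_abs_self _
        _ ≤ π/2 := hdb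




/-- One side of the Hausdorff distance bound between segments. -/
lemma seg_side (A B A' B' : ℂ) (x : ℂ) (hx : x ∈ segment ℝ A B) :
    ∃ y ∈ segment ℝ A' B', dist x y ≤ max (dist A A') (dist B B') := by
  obtain ⟨s, t, hs, ht, hst, rfl⟩ := hx
  refine ⟨s • A' + t • B', ⟨s, t, hs, ht, hst, rfl⟩, ?_⟩
  have key : (s • A + t • B) - (s • A' + t • B') = s • (A - A') + t • (B - B') := by
    module
  rw [dist_eq_norm, key]
  calc ‖s • (A - A') + t • (B - B')‖ ≤ ‖s • (A - A')‖ + ‖t • (B - B')‖ := norm_add_le _ _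
    _ = s * dist A A' + t * dist B B' := by
        rw [norm_smul, norm_smul, Real.norm_of_nonneg hs, Real.norm_of_nonneg ht,
          dist_eq_norm, dist_eq_norm]
    _ ≤ s * max (dist A A') (dist B B') + t * max (dist A A') (dist B B') := by
        gcongr
        · exact le_max_left _ _
        · exact le_max_right _ _
    _ = max (dist A A') (dist B B') := by rw [← add_mul, hst, one_mul]

lemma upperBound (A B A' B' : ℂ) :
    hausdorffDist (segment ℝ A B) (segment ℝ A' B') ≤ max (dist A A') (dist B B') := by
  apply hausdorffDist_le_of_mem_dist (le_max_iff.2 (Or.inl dist_nonneg))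
  · exact fun x hx => seg_side A B A' B' x hx
  · intro x hx
    obtain ⟨y, hy, hd⟩ := seg_side A' B' A B x hx
    exact ⟨y, hy, by rwa [dist_comm A' A, dist_comm B' B] at hd⟩

def segC (R a b : ℝ) : Set ℂ := segment ℝ (pt R a) (pt R b)

lemma pt_shift {R : ℝ} (x : ℝ) (k : ℤ) : pt R (x + 2*π*k) = pt R x := by
  unfold pt
  congr 1
  rw [show ((x + 2*π*k : ℝ) : ℂ) = (x:ℂ) + 2*π*(k:ℂ) by push_cast; ring, add_mul,
    Complex.exp_add]
  rw [show (2*π*(k:ℂ)) * Complex.I = (k:ℤ) * (2*π*Complex.I) by push_cast; ring]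
  rw [Complex.exp_int_mul_two_pi_mul_I, mul_one]

lemma pt_eq_iff {R : ℝ} (hR : 0 < R) {a b : ℝ} :
    pt R a = pt R b ↔ ∃ k : ℤ, b - a = 2*π*k := by
  constructor
  · intro h
    have h2 : Complex.exp ((a:ℂ) * Complex.I) = Complex.exp ((b:ℂ) * Complex.I) := by
      have := h
      unfold pt at this
      exact mul_left_cancel₀ (by exact_mod_cast hR.ne') this
    have h3 : Complex.exp (((a:ℂ) - b) * Complex.I) = 1 := by
      rw [sub_mul, Complex.exp_sub, h2, div_self (Complex.exp_ne_zero _)]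
    obtain ⟨k, hk⟩ := Complex.exp_eq_one_iff.1 h3
    refine ⟨-k, ?_⟩
    have : ((a:ℂ) - b) = k * (2*π) := by
      have hI2 : ((a:ℂ) - b) * Complex.I = ((k:ℂ) * (2*π)) * Complex.I := by
        linear_combination hk
      exact mul_right_cancel₀ Complex.I_ne_zero hI2
    have : (a:ℝ) - b = k * (2*π) := by exact_mod_cast this
    push_cast
    linarith
  · rintro ⟨k, hk⟩
    rw [show b = a + 2*π*k by linarith, pt_shift]

lemma pt_ne {R : ℝ} (hR : 0 < R) {a b : ℝ} (h1 : 0 < b - a) (h2 : b - a < 2*π) :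
    pt R a ≠ pt R b := by
  rw [Ne, pt_eq_iff hR]
  rintro ⟨k, hk⟩
  have hπ := Real.pi_pos
  have hk0 : 0 < (k:ℝ) := by nlinarith
  have hk1 : (k:ℝ) < 1 := by nlinarith
  have : 0 < k := by exact_mod_cast hk0
  have : k < 1 := by exact_mod_cast hk1
  omega

def mkChord {R : ℝ} (hR : 0 < R) {a b : ℝ} (hne : pt R a ≠ pt R b) : Chords R :=
  ⟨⟨⟨segC R a b, isCompact_seg _ _⟩, ⟨_, left_mem_segment ℝ _ _⟩⟩,
    ⟨pt R a, pt R b, hne, pt_mem_sphere hR.le a, pt_mem_sphere hR.le b, rfl⟩⟩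

lemma mkChord_val {R : ℝ} (hR : 0 < R) {a b : ℝ} (hne : pt R a ≠ pt R b) :
    ((mkChord hR hne).1 : Set ℂ) = segC R a b := rfl

def F {R : ℝ} (hR : 0 < R) (p : Fin 2 → ℝ) : Chords R :=
  if h : pt R (p 0) ≠ pt R (p 1) then mkChord hR h
  else mkChord hR (pt_ne hR (a := 0) (b := π) (by simpa using Real.pi_pos) (by linarith [Real.pi_pos]))

lemma F_val {R : ℝ} (hR : 0 < R) {p : Fin 2 → ℝ} (h : pt R (p 0) ≠ pt R (p 1)) :
    ((F hR p).1 : Set ℂ) = segC R (p 0) (p 1) := by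
  rw [F, dif_pos h, mkChord_val]

lemma dist_chords {R : ℝ} (χ₁ χ₂ : Chords R) :
    dist χ₁ χ₂ = hausdorffDist (χ₁.1 : Set ℂ) (χ₂.1 : Set ℂ) := by
  have h1 : dist χ₁ χ₂ = dist χ₁.1 χ₂.1 := rfl
  rw [h1, Metric.NonemptyCompacts.dist_eq]



lemma diam_seg (A B : ℂ) : Metric.diam (segment ℝ A B) = dist A B := by
  apply le_antisymm
  · apply Metric.diam_le_of_forall_dist_le dist_nonneg
    rintro x ⟨s, t, hs, ht, hst, rfl⟩ y ⟨c, d, hc, hd, hcd, rfl⟩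
    have key : (s • A + t • B) - (c • A + d • B) = (s - c) • (A - B) := by
      have ht' : t = 1 - s := by linarith
      have hd' : d = 1 - c := by linarith
      rw [ht', hd']
      module
    rw [dist_eq_norm, key, norm_smul]
    have : |s - c| ≤ 1 := by
      rw [abs_le]
      constructor <;> nlinarith
    calc |s - c| * ‖A - B‖ ≤ 1 * ‖A - B‖ := by
          apply mul_le_mul_of_nonneg_right this (norm_nonneg _)
      _ = dist A B := by rw [one_mul, dist_eq_norm]
  · exact Metric.dist_le_diam_of_mem (isCompact_seg A B).isBounded
      (left_mem_segment ℝ A B) (right_mem_segment ℝ A B)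

lemma endpoint_mem {R : ℝ} {A B x : ℂ} (hA : ‖A‖ = R) (hB : ‖B‖ = R)
    (hx : ‖x‖ = R) (hmem : x ∈ segment ℝ A B) : x = A ∨ x = B := by
  obtain ⟨s, t, hs, ht, hst, rfl⟩ := hmem
  rcases eq_or_lt_of_le hs with hs0 | hs0
  · right
    rw [← hs0] at hst
    simp [← hs0, show t = 1 by linarith]
  rcases eq_or_lt_of_le ht with ht0 | ht0
  · left
    rw [← ht0] at hst
    simp [← ht0, show s = 1 by linarith]
  by_cases hAB : A = B
  · left
    rw [hAB, ← add_smul, hst, one_smul]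
  exfalso
  have := norm_combo_lt_of_ne (E := ℂ) (r := R)
    (by rw [hA]) (by rw [hB]) hAB hs0 ht0 hst
  rw [hx] at this
  exact lt_irrefl _ this

lemma seg_eq_seg {R : ℝ} (hR : 0 < R) {A B C D : ℂ}
    (hA : ‖A‖ = R) (hB : ‖B‖ = R)
    (hC : ‖C‖ = R) (hD : ‖D‖ = R)
    (hCD : C ≠ D) (h : segment ℝ A B = segment ℝ C D) :
    (C = A ∧ D = B) ∨ (C = B ∧ D = A) := by
  have hCm : C ∈ segment ℝ A B := by rw [h]; exact left_mem_segment ℝ C D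
  have hDm : D ∈ segment ℝ A B := by rw [h]; exact right_mem_segment ℝ C D
  rcases endpoint_mem hA hB hC hCm with hC' | hC' <;>
    rcases endpoint_mem hA hB hD hDm with hD' | hD'
  · exact absurd (hC'.trans hD'.symm) hCD
  · exact Or.inl ⟨hC', hD'⟩
  · exact Or.inr ⟨hC', hD'⟩
  · exact absurd (hC'.trans hD'.symm) hCD

lemma rep_sorted {R : ℝ} (hR : 0 < R) {α β : ℝ} (h1 : 0 < β - α) (h2 : β - α < 2*π) :
    ∃ a g : ℝ, 0 ≤ a ∧ a < 2*π ∧ 0 < g ∧ g ≤ π ∧ segC R α β = segC R a (a + g) := by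
  have hπ := Real.pi_pos
  rcases le_total (β - α) π with hd | hd
  · refine ⟨2*π*Int.fract (α/(2*π)), β - α, ?_, ?_, h1, hd, ?_⟩
    · have := Int.fract_nonneg (α/(2*π)); nlinarith
    · have := Int.fract_lt_one (α/(2*π))
      nlinarith
    · have ha : pt R (2*π*Int.fract (α/(2*π))) = pt R α := by
        rw [Int.fract]
        rw [show 2*π*(α/(2*π) - ⌊α/(2*π)⌋) = α + 2*π*(-⌊α/(2*π)⌋ : ℤ) by push_cast; field_simp; ring]
        rw [pt_shift]
      have hb : pt R (2*π*Int.fract (α/(2*π)) + (β - α)) = pt R β := by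
        rw [Int.fract]
        rw [show 2*π*(α/(2*π) - ⌊α/(2*π)⌋) + (β - α) = β + 2*π*(-⌊α/(2*π)⌋ : ℤ) by
          push_cast; field_simp; ring]
        rw [pt_shift]
      rw [segC, segC, ha, hb]
  · refine ⟨2*π*Int.fract (β/(2*π)), 2*π - (β - α), ?_, ?_, by linarith, by linarith, ?_⟩
    · have := Int.fract_nonneg (β/(2*π)); nlinarith
    · have := Int.fract_lt_one (β/(2*π))
      nlinarith
    · have ha : pt R (2*π*Int.fract (β/(2*π))) = pt R β := by
        rw [Int.fract]
        rw [show 2*π*(β/(2*π) - ⌊β/(2*π)⌋) = β + 2*π*(-⌊β/(2*π)⌋ : ℤ) by push_cast; field_simp; ring]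
        rw [pt_shift]
      have hb : pt R (2*π*Int.fract (β/(2*π)) + (2*π - (β - α))) = pt R α := by
        rw [Int.fract]
        rw [show 2*π*(β/(2*π) - ⌊β/(2*π)⌋) + (2*π - (β - α)) = α + 2*π*((1-⌊β/(2*π)⌋ : ℤ)) by
          push_cast; field_simp; ring]
        rw [pt_shift]
      rw [segC, segC, ha, hb, segment_symm]



def Sfull : Set (Fin 2 → ℝ) :=
  {p | 0 ≤ p 0 ∧ p 0 < 2*π ∧ 0 < p 1 - p 0 ∧ p 1 - p 0 ≤ π}

def Snum : Set (Fin 2 → ℝ) :=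
  {p | 0 ≤ p 0 ∧ p 0 < 2*π ∧ 2*π/3 < p 1 - p 0 ∧ p 1 - p 0 ≤ π}

def Tinj : Set (Fin 2 → ℝ) :=
  {p | 0 ≤ p 0 ∧ p 0 < 2*π ∧ 0 < p 1 - p 0 ∧ p 1 - p 0 < π}

lemma pt_ne_of_mem {R : ℝ} (hR : 0 < R) {p : Fin 2 → ℝ} (h1 : 0 < p 1 - p 0)
    (h2 : p 1 - p 0 < 2*π) : pt R (p 0) ≠ pt R (p 1) := pt_ne hR h1 h2

lemma int_zero_of_bounds {c : ℝ} {k : ℤ} (h : c = 2*π*k) (h1 : -(2*π) < c) (h2 : c < 2*π) :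
    k = 0 := by
  have hπ := Real.pi_pos
  have h2π : (0:ℝ) < 2*π := by linarith
  have hl : 2*π*(-1:ℝ) < 2*π*(k:ℝ) := by linarith
  have hu : 2*π*(k:ℝ) < 2*π*(1:ℝ) := by linarith
  have hl' : (-1:ℝ) < (k:ℝ) := lt_of_mul_lt_mul_left hl (by linarith)
  have hu' : (k:ℝ) < 1 := lt_of_mul_lt_mul_left hu (by linarith)
  have hl'' : -1 < k := by exact_mod_cast hl'
  have hu'' : k < 1 := by exact_mod_cast hu'
  omega

lemma injF {R : ℝ} (hR : 0 < R) : Set.InjOn (F hR) Tinj := by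
  have hπ := Real.pi_pos
  have h2π : (0:ℝ) < 2*π := by linarith
  rintro p ⟨hp0, hp1, hp2, hp3⟩ q ⟨hq0, hq1, hq2, hq3⟩ h
  have hpne : pt R (p 0) ≠ pt R (p 1) := pt_ne hR hp2 (by linarith)
  have hqne : pt R (q 0) ≠ pt R (q 1) := pt_ne hR hq2 (by linarith)
  have hsets : segC R (p 0) (p 1) = segC R (q 0) (q 1) := by
    rw [← F_val hR hpne, ← F_val hR hqne, h]
  rcases seg_eq_seg hR (abs_pt hR.le (p 0)) (abs_pt hR.le (p 1)) (abs_pt hR.le (q 0))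
      (abs_pt hR.le (q 1)) hqne hsets with ⟨hC, hD⟩ | ⟨hC, hD⟩
  · obtain ⟨k, hk⟩ := (pt_eq_iff hR).1 hC
    obtain ⟨l, hl⟩ := (pt_eq_iff hR).1 hD
    have hk0 : k = 0 := int_zero_of_bounds hk (by linarith) (by linarith)
    rw [hk0] at hk
    norm_num at hk
    have hl0 : l = 0 := int_zero_of_bounds hl (by linarith) (by linarith)
    rw [hl0] at hl
    norm_num at hl
    funext i
    fin_cases i
    · show p 0 = q 0; linarith
    · show p 1 = q 1; linarith
  · exfalso
    obtain ⟨k, hk⟩ := (pt_eq_iff hR).1 hC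
    obtain ⟨l, hl⟩ := (pt_eq_iff hR).1 hD
    have hsum : (p 1 - p 0) + (q 1 - q 0) = 2*π*((k - l : ℤ) : ℝ) := by push_cast; linarith
    have h1 : 2*π*(0:ℝ) < 2*π*((k - l : ℤ) : ℝ) := by linarith
    have h2 : 2*π*((k - l : ℤ) : ℝ) < 2*π*(1:ℝ) := by linarith
    have h1' : (0:ℝ) < ((k - l : ℤ) : ℝ) := lt_of_mul_lt_mul_left h1 (by linarith)
    have h2' : ((k - l : ℤ) : ℝ) < 1 := lt_of_mul_lt_mul_left h2 (by linarith)
    have h1'' : 0 < k - l := by exact_mod_cast h1'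
    have h2'' : k - l < 1 := by exact_mod_cast h2'
    omega

lemma surjF {R : ℝ} (hR : 0 < R) (χ : Chords R) : ∃ p ∈ Sfull, F hR p = χ := by
  have hπ := Real.pi_pos
  obtain ⟨A, B, hAB, hA, hB, hseg⟩ := χ.2
  have hAabs : ‖A‖ = R := by
    have := mem_sphere_iff_norm.1 hA
    rwa [sub_zero] at this
  have hBabs : ‖B‖ = R := by
    have := mem_sphere_iff_norm.1 hB
    rwa [sub_zero] at this
  have hptA : pt R (Complex.arg A) = A := by
    rw [pt, ← hAabs]
    exact_mod_cast Complex.norm_mul_exp_arg_mul_I A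
  have hptB : pt R (Complex.arg B) = B := by
    rw [pt, ← hBabs]
    exact_mod_cast Complex.norm_mul_exp_arg_mul_I B
  have harg : Complex.arg A ≠ Complex.arg B := by
    intro hcon
    exact hAB (by rw [← hptA, ← hptB, hcon])
  have habnd : ∀ z : ℂ, -π < Complex.arg z ∧ Complex.arg z ≤ π := fun z =>
    ⟨Complex.neg_pi_lt_arg z, Complex.arg_le_pi z⟩
  obtain ⟨a, g, ha0, ha1, hg0, hg1, hsegeq⟩ :
      ∃ a g : ℝ, 0 ≤ a ∧ a < 2*π ∧ 0 < g ∧ g ≤ π ∧ segment ℝ A B = segC R a (a + g) := by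
    rcases lt_or_gt_of_ne harg with hlt | hlt
    · obtain ⟨a, g, h0, h1, h2, h3, h4⟩ := rep_sorted hR (α := Complex.arg A) (β := Complex.arg B)
        (by linarith) (by linarith [(habnd A).1, (habnd A).2, (habnd B).1, (habnd B).2])
      refine ⟨a, g, h0, h1, h2, h3, ?_⟩
      rw [← h4, segC, hptA, hptB]
    · obtain ⟨a, g, h0, h1, h2, h3, h4⟩ := rep_sorted hR (α := Complex.arg B) (β := Complex.arg A)
        (by linarith) (by linarith [(habnd A).1, (habnd A).2, (habnd B).1, (habnd B).2])
      refine ⟨a, g, h0, h1, h2, h3, ?_⟩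
      rw [← h4, segC, hptA, hptB, segment_symm]
  refine ⟨![a, a + g], ?_, ?_⟩
  · refine ⟨?_, ?_, ?_, ?_⟩ <;> simp [Matrix.cons_val_zero, Matrix.cons_val_one] <;> linarith
  · have hne : pt R (![a, a + g] 0) ≠ pt R (![a, a + g] 1) := by
      simp only [Matrix.cons_val_zero, Matrix.cons_val_one, Matrix.head_cons]
      exact pt_ne hR (by linarith) (by linarith)
    apply Subtype.ext
    apply TopologicalSpace.NonemptyCompacts.ext
    rw [F_val hR hne]
    simp only [Matrix.cons_val_zero, Matrix.cons_val_one, Matrix.head_cons]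
    rw [← hsegeq, ← hseg]

lemma univ_eq {R : ℝ} (hR : 0 < R) : (Set.univ : Set (Chords R)) = F hR '' Sfull := by
  apply Set.eq_of_subset_of_subset
  · intro χ _
    obtain ⟨p, hp, hfp⟩ := surjF hR χ
    exact ⟨p, hp, hfp⟩
  · exact fun _ _ => trivial

lemma diam_F {R : ℝ} (hR : 0 < R) {p : Fin 2 → ℝ} (h1 : 0 < p 1 - p 0) (h2 : p 1 - p 0 ≤ π) :
    Metric.diam ((F hR p).1 : Set ℂ) = 2 * R * Real.sin ((p 1 - p 0)/2) := by
  have hπ := Real.pi_pos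
  have hne : pt R (p 0) ≠ pt R (p 1) := pt_ne hR h1 (by linarith)
  rw [F_val hR hne, segC, diam_seg, dist_pt_pt hR.le]
  rw [show (p 0 - p 1)/2 = -((p 1 - p 0)/2) by ring, Real.sin_neg, abs_neg]
  rw [abs_of_nonneg (Real.sin_nonneg_of_nonneg_of_le_pi (by linarith) (by linarith))]

lemma event_eq {R : ℝ} (hR : 0 < R) :
    {χ : Chords R | Real.sqrt 3 * R < Metric.diam (χ.1 : Set ℂ)} = F hR '' Snum := by
  have hπ := Real.pi_pos
  have hsqrt3 : Real.sin (π/3) = Real.sqrt 3 / 2 := Real.sin_pi_div_three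
  apply Set.eq_of_subset_of_subset
  · intro χ hχ
    obtain ⟨p, ⟨hp0, hp1, hp2, hp3⟩, hfp⟩ := surjF hR χ
    refine ⟨p, ⟨hp0, hp1, ?_, hp3⟩, hfp⟩
    have hd : Metric.diam ((F hR p).1 : Set ℂ) = 2 * R * Real.sin ((p 1 - p 0)/2) :=
      diam_F hR hp2 hp3
    rw [hfp] at hd
    have hlt : Real.sqrt 3 * R < 2 * R * Real.sin ((p 1 - p 0)/2) := by
      rw [← hd]; exact hχ
    by_contra hcon
    push_neg at hcon
    have hmono : Real.sin ((p 1 - p 0)/2) ≤ Real.sin (π/3) := by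
      apply Real.strictMonoOn_sin.monotoneOn ⟨by linarith, by linarith⟩
        ⟨by linarith, by linarith⟩ (by linarith)
    nlinarith [Real.sq_sqrt (by norm_num : (3:ℝ) ≥ 0), Real.sqrt_nonneg 3]
  · rintro χ ⟨p, ⟨hp0, hp1, hp2, hp3⟩, rfl⟩
    show Real.sqrt 3 * R < Metric.diam _
    rw [diam_F hR (by linarith) hp3]
    have hmono : Real.sin (π/3) < Real.sin ((p 1 - p 0)/2) := by
      apply Real.strictMonoOn_sin ⟨by linarith, by linarith⟩ ⟨by linarith, by linarith⟩
        (by linarith)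
    nlinarith [Real.sq_sqrt (by norm_num : (3:ℝ) ≥ 0), Real.sqrt_nonneg 3]


def Gset (R : ℝ) : Set (Fin 2 → ℝ) := {p | pt R (p 0) ≠ pt R (p 1)}

lemma hausdorff_eq_volume : (μH[(2:ℝ)] : Measure (Fin 2 → ℝ)) = volume := by
  have h := MeasureTheory.hausdorffMeasure_pi_real (ι := Fin 2)
  simpa using h

lemma rpow_two_ofReal {x : ℝ} (hx : 0 ≤ x) :
    ((x.toNNReal : ℝ≥0∞)) ^ (2:ℝ) = ENNReal.ofReal (x^2) := by
  have h1 : ((x.toNNReal : ℝ≥0∞)) = ENNReal.ofReal x := rfl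
  rw [h1, show (2:ℝ) = ((2:ℕ):ℝ) by norm_num, ENNReal.rpow_natCast,
    ← ENNReal.ofReal_pow hx]

lemma lipF {R : ℝ} (hR : 0 < R) : LipschitzOnWith R.toNNReal (F hR) (Gset R) := by
  apply LipschitzOnWith.of_dist_le_mul
  intro p hp q hq
  have hcoe : (R.toNNReal : ℝ) = R := Real.coe_toNNReal R hR.le
  rw [hcoe, dist_chords, F_val hR hp, F_val hR hq, segC, segC]
  refine le_trans (upperBound _ _ _ _) ?_
  have key : ∀ i : Fin 2, dist (pt R (p i)) (pt R (q i)) ≤ R * dist p q := by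
    intro i
    rw [dist_pt_pt hR.le]
    have h1 : |Real.sin ((p i - q i)/2)| ≤ |(p i - q i)/2| := Real.abs_sin_le_abs
    have h2 : |p i - q i| ≤ dist p q := by
      rw [← Real.dist_eq]
      exact dist_le_pi_dist p q i
    rw [abs_div] at h1
    calc 2 * R * |Real.sin ((p i - q i)/2)| ≤ 2 * R * (|p i - q i| / |(2:ℝ)|) := by
          apply mul_le_mul_of_nonneg_left h1 (by positivity)
      _ = R * |p i - q i| := by rw [abs_two]; ring
      _ ≤ R * dist p q := by apply mul_le_mul_of_nonneg_left h2 hR.le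
  exact max_le (key 0) (key 1)

/-- Generic upper bound via a finite cover by sets. -/
lemma upper_cover {R : ℝ} (hR : 0 < R) {S : Set (Fin 2 → ℝ)} (hS : S ⊆ Gset R)
    {t : Finset ℕ} {C : ℕ → Set (Fin 2 → ℝ)} (hcov : S ⊆ ⋃ i ∈ t, C i) :
    μH[2] (F hR '' S) ≤ ∑ i ∈ t, ENNReal.ofReal (R^2) * volume (C i) := by
  have himg : F hR '' S ⊆ ⋃ i ∈ t, F hR '' (S ∩ C i) := by
    rintro x ⟨p, hp, rfl⟩
    obtain ⟨i, hi, hpi⟩ := Set.mem_iUnion₂.1 (hcov hp)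
    exact Set.mem_iUnion₂.2 ⟨i, hi, ⟨p, ⟨hp, hpi⟩, rfl⟩⟩
  refine le_trans (measure_mono himg) (le_trans (measure_biUnion_finset_le _ _) ?_)
  apply Finset.sum_le_sum
  intro i _
  have hlip : LipschitzOnWith R.toNNReal (F hR) (S ∩ C i) :=
    (lipF hR).mono (le_trans Set.inter_subset_left hS)
  calc μH[2] (F hR '' (S ∩ C i))
      ≤ (R.toNNReal : ℝ≥0∞) ^ (2:ℝ) * μH[2] (S ∩ C i) :=
        hlip.hausdorffMeasure_image_le (by norm_num)
    _ ≤ ENNReal.ofReal (R^2) * volume (C i) := by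
        rw [rpow_two_ofReal hR.le]
        apply mul_le_mul_right
        rw [hausdorff_eq_volume]
        exact measure_mono Set.inter_subset_right

/-- Generic inverse-Lipschitz lower bound on a small box. -/
lemma lower_box {R : ℝ} (hR : 0 < R) {Q : Set (Fin 2 → ℝ)} {ρ : ℝ}
    (hρ0 : 0 < ρ) (hρ1 : ρ ≤ 1) (hρ2 : ρ ≤ π/2)
    (hQgap : ∀ p ∈ Q, 0 < p 1 - p 0 ∧ p 1 - p 0 ≤ π)
    (hQsmall : ∀ p ∈ Q, ∀ q ∈ Q, dist p q ≤ ρ) :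
    ENNReal.ofReal ((R * (1 - ρ^2/4))^2) * volume Q ≤ μH[2] (F hR '' Q) := by
  set c := R * (1 - ρ^2/4) with hc
  have hκ : 0 < 1 - ρ^2/4 := by nlinarith
  have hc0 : 0 < c := by positivity
  -- key metric estimate
  have key : ∀ p ∈ Q, ∀ q ∈ Q, c * dist p q ≤ dist (F hR p) (F hR q) := by
    intro p hp q hq
    obtain ⟨hg1, hg2⟩ := hQgap p hp
    obtain ⟨hg1', hg2'⟩ := hQgap q hq
    have hπ := Real.pi_pos
    have hpne : pt R (p 0) ≠ pt R (p 1) := pt_ne hR hg1 (by linarith)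
    have hqne : pt R (q 0) ≠ pt R (q 1) := pt_ne hR hg1' (by linarith)
    rw [dist_chords, F_val hR hpne, F_val hR hqne]
    set m := max |q 0 - p 0| |q 1 - p 1| with hm
    have hm1 : |q 0 - p 0| ≤ dist p q := by
      rw [abs_sub_comm, ← Real.dist_eq]; exact dist_le_pi_dist p q 0
    have hm2 : |q 1 - p 1| ≤ dist p q := by
      rw [abs_sub_comm, ← Real.dist_eq]; exact dist_le_pi_dist p q 1
    have hmle : m ≤ dist p q := max_le hm1 hm2
    have hdist_le : dist p q ≤ m := by
      rw [dist_pi_le_iff (le_trans (abs_nonneg _) (le_max_left _ _))]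
      intro i
      fin_cases i
      · rw [Real.dist_eq, abs_sub_comm]; exact le_max_left _ _
      · rw [Real.dist_eq, abs_sub_comm]; exact le_max_right _ _
    have hmρ : m ≤ ρ := le_trans hmle (hQsmall p hp q hq)
    have hm0 : 0 ≤ m := le_trans (abs_nonneg _) (le_max_left _ _)
    have hsin : c * m ≤ R * Real.sin m := by
      rcases eq_or_lt_of_le hm0 with h0 | h0
      · rw [← h0]; simp
      · have := Real.sin_gt_sub_cube h0
        rw [hc]
        have hmm : m * m ≤ ρ * ρ := mul_self_le_mul_self hm0 hmρ
        have : m - m^3/4 ≥ m * (1 - ρ^2/4) := by nlinarith [mul_le_mul_of_nonneg_left hmm h0.le]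
        have hs : m * (1 - ρ^2/4) ≤ Real.sin m := by nlinarith [pow_pos h0 3]
        nlinarith [mul_le_mul_of_nonneg_left hs hR.le]
    calc c * dist p q ≤ c * m := by
          rcases le_or_gt (dist p q) m with h | h
          · exact mul_le_mul_of_nonneg_left h hc0.le
          · linarith [mul_le_mul_of_nonneg_left hdist_le hc0.le]
      _ ≤ R * Real.sin m := hsin
      _ ≤ _ := lowerBound hR.le hg1 hg2 hg1' hg2'
          (le_trans (le_max_left _ _) (le_trans hmle (le_trans (hQsmall p hp q hq) hρ2)))
          (le_trans (le_max_right _ _) (le_trans hmle (le_trans (hQsmall p hp q hq) hρ2)))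
  -- injectivity on Q
  have hinj : Set.InjOn (F hR) Q := by
    intro p hp q hq h
    by_contra hne
    have hd : 0 < dist p q := dist_pos.2 hne
    have := key p hp q hq
    rw [h, dist_self] at this
    nlinarith
  -- inverse function is Lipschitz on the image
  set φ := Function.invFunOn (F hR) Q with hφ
  have hφlip : LipschitzOnWith (c⁻¹).toNNReal φ (F hR '' Q) := by
    apply LipschitzOnWith.of_dist_le_mul
    rintro x ⟨p, hp, rfl⟩ y ⟨q, hq, rfl⟩
    have hpx : φ (F hR p) = p := hinj.leftInvOn_invFunOn hp
    have hqy : φ (F hR q) = q := hinj.leftInvOn_invFunOn hq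
    rw [hpx, hqy, Real.coe_toNNReal _ (by positivity)]
    have hk := key p hp q hq
    rw [inv_mul_eq_div, le_div_iff₀ hc0, mul_comm]
    exact hk
  have hQsub : Q ⊆ φ '' (F hR '' Q) := by
    intro p hp
    exact ⟨F hR p, ⟨p, hp, rfl⟩, hinj.leftInvOn_invFunOn hp⟩
  have hμ : volume Q ≤ ((c⁻¹).toNNReal : ℝ≥0∞) ^ (2:ℝ) * μH[2] (F hR '' Q) := by
    rw [← hausdorff_eq_volume]
    exact le_trans (measure_mono hQsub) (hφlip.hausdorffMeasure_image_le (by norm_num))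
  calc ENNReal.ofReal (c^2) * volume Q
      ≤ ENNReal.ofReal (c^2) * (((c⁻¹).toNNReal : ℝ≥0∞) ^ (2:ℝ) * μH[2] (F hR '' Q)) :=
        mul_le_mul_right hμ _
    _ = (ENNReal.ofReal (c^2) * ENNReal.ofReal ((c⁻¹)^2)) * μH[2] (F hR '' Q) := by
        rw [rpow_two_ofReal (by positivity), mul_assoc]
    _ = μH[2] (F hR '' Q) := by
        rw [← ENNReal.ofReal_mul (by positivity)]
        rw [show c^2 * (c⁻¹)^2 = 1 by field_simp]
        simp


def Box (I J : Set ℝ) : Set (Fin 2 → ℝ) := {p | p 0 ∈ I ∧ p 1 ∈ J}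

lemma box_pi (I J : Set ℝ) : Box I J = Set.univ.pi ![I, J] := by
  ext p
  simp only [Box, Set.mem_setOf_eq, Set.mem_univ_pi, Fin.forall_fin_two]
  rfl

lemma volume_box (I J : Set ℝ) : volume (Box I J) = volume I * volume J := by
  rw [box_pi, volume_pi_pi]
  simp [Fin.prod_univ_two]

lemma isCompact_box {a b c d : ℝ} : IsCompact (Box (Set.Icc a b) (Set.Icc c d)) := by
  rw [box_pi]
  apply isCompact_univ_pi
  intro i
  fin_cases i <;> simp <;> exact isCompact_Icc

lemma tinj_sub_gset {R : ℝ} (hR : 0 < R) : Tinj ⊆ Gset R := by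
  rintro p ⟨h0, h1, h2, h3⟩
  have hπ := Real.pi_pos
  exact pt_ne hR h2 (by linarith)

lemma lower_sum {R : ℝ} (hR : 0 < R) {t : Finset (ℕ × ℕ)} {Q : ℕ × ℕ → Set (Fin 2 → ℝ)}
    {S : Set (Fin 2 → ℝ)} {ρ : ℝ}
    (hρ0 : 0 < ρ) (hρ1 : ρ ≤ 1) (hρ2 : ρ ≤ π/2)
    (hsub : ∀ k ∈ t, Q k ⊆ S) (hST : S ⊆ Tinj)
    (hsmall : ∀ k ∈ t, ∀ p ∈ Q k, ∀ q ∈ Q k, dist p q ≤ ρ)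
    (hcomp : ∀ k ∈ t, IsCompact (Q k))
    (hdisj : (t : Set (ℕ × ℕ)).PairwiseDisjoint Q) :
    ∑ k ∈ t, ENNReal.ofReal ((R * (1 - ρ^2/4))^2) * volume (Q k) ≤ μH[2] (F hR '' S) := by
  have hQT : ∀ k ∈ t, Q k ⊆ Tinj := fun k hk => (hsub k hk).trans hST
  have hgap : ∀ k ∈ t, ∀ p ∈ Q k, 0 < p 1 - p 0 ∧ p 1 - p 0 ≤ π := by
    intro k hk p hp
    obtain ⟨_, _, h2, h3⟩ := hQT k hk hp
    exact ⟨h2, h3.le⟩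
  have hmeas : ∀ k ∈ t, MeasurableSet (F hR '' Q k) := by
    intro k hk
    have hcont : ContinuousOn (F hR) (Q k) :=
      ((lipF hR).mono ((hQT k hk).trans (tinj_sub_gset hR))).continuousOn
    exact ((hcomp k hk).image_of_continuousOn hcont).measurableSet
  have himdisj : (t : Set (ℕ × ℕ)).PairwiseDisjoint (fun k => F hR '' Q k) := by
    intro i hi j hj hij
    have hd := hdisj hi hj hij
    rw [Function.onFun, Set.disjoint_left]
    rintro x ⟨p, hp, rfl⟩ ⟨q, hq, hfq⟩
    have : q = p := injF hR (hQT j hj hq) (hQT i hi hp) hfq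
    rw [this] at hq
    exact (Set.disjoint_left.1 hd) hp hq
  calc ∑ k ∈ t, ENNReal.ofReal ((R * (1 - ρ^2/4))^2) * volume (Q k)
      ≤ ∑ k ∈ t, μH[2] (F hR '' Q k) := by
        apply Finset.sum_le_sum
        intro k hk
        exact lower_box hR hρ0 hρ1 hρ2 (hgap k hk) (hsmall k hk)
    _ = μH[2] (⋃ k ∈ t, F hR '' Q k) := (measure_biUnion_finset himdisj hmeas).symm
    _ ≤ μH[2] (F hR '' S) := by
        apply measure_mono
        apply Set.iUnion₂_subset
        intro k hk
        exact Set.image_mono (hsub k hk)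


lemma sfull_sub_gset {R : ℝ} (hR : 0 < R) : Sfull ⊆ Gset R := by
  rintro p ⟨h0, h1, h2, h3⟩
  have hπ := Real.pi_pos
  exact pt_ne hR h2 (by linarith)

lemma snum_sub_sfull : Snum ⊆ Sfull := by
  rintro p ⟨h0, h1, h2, h3⟩
  have hπ := Real.pi_pos
  exact ⟨h0, h1, by linarith, h3⟩

lemma upper_est {R : ℝ} (hR : 0 < R) (n : ℕ) (hn : 1 ≤ n) (off : ℝ) (hoff : 0 ≤ off)
    {S : Set (Fin 2 → ℝ)} (hS : S ⊆ Sfull)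
    (hSoff : ∀ p ∈ S, p 0 + off ≤ p 1) :
    μH[2] (F hR '' S) ≤
      ENNReal.ofReal (R^2 * (2*π) * ((π - off) + π/(3*n))) := by
  have hπ := Real.pi_pos
  set ρ : ℝ := π/(3*n) with hρ
  have hn0 : (0:ℝ) < (n:ℕ) := by exact_mod_cast hn
  have hρ0 : 0 < ρ := by positivity
  have h6n : (6*n : ℕ) * ρ = 2*π := by
    push_cast
    field_simp [hρ]
    rw [hρ]
    field_simp
    norm_num
  set C : ℕ → Set (Fin 2 → ℝ) := fun i =>
    Box (Set.Ico ((i:ℝ)*ρ) ((i:ℝ)*ρ + ρ)) (Set.Ico ((i:ℝ)*ρ + off) ((i:ℝ)*ρ + ρ + π)) with hC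
  have hcov : S ⊆ ⋃ i ∈ Finset.range (6*n), C i := by
    intro p hp
    obtain ⟨h0, h1, h2, h3⟩ := hS hp
    have hoffp := hSoff p hp
    set i := ⌊p 0 / ρ⌋₊ with hi
    have hfl1 : (i:ℝ) ≤ p 0 / ρ := Nat.floor_le (by positivity)
    have hfl2 : p 0 / ρ < i + 1 := Nat.lt_floor_add_one _
    have hmem1 : (i:ℝ)*ρ ≤ p 0 := by
      rw [← le_div_iff₀ hρ0]; exact hfl1
    have hmem2 : p 0 < (i:ℝ)*ρ + ρ := by
      have := (div_lt_iff₀ hρ0).1 hfl2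
      linarith [this]
    have hilt : i < 6*n := by
      have : (i:ℝ) < (6*n:ℕ) := by
        have h2π : p 0 < (6*n:ℕ) * ρ := by rw [h6n]; exact h1
        have := lt_of_le_of_lt hmem1 h2π
        exact lt_of_mul_lt_mul_right (by linarith [this]) hρ0.le
      exact_mod_cast this
    apply Set.mem_iUnion₂.2
    refine ⟨i, Finset.mem_range.2 hilt, ?_, ?_⟩
    · exact ⟨hmem1, hmem2⟩
    · constructor
      · linarith
      · linarith
  refine le_trans (upper_cover hR (fun p hp => sfull_sub_gset hR (hS hp)) hcov) ?_
  have hterm : ∀ i ∈ Finset.range (6*n),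
      ENNReal.ofReal (R^2) * volume (C i)
        = ENNReal.ofReal (R^2) * (ENNReal.ofReal ρ * ENNReal.ofReal (ρ + π - off)) := by
    intro i _
    rw [hC]
    rw [volume_box, Real.volume_Ico, Real.volume_Ico]
    congr 2
    · ring
    · ring
  rw [Finset.sum_congr rfl hterm, Finset.sum_const, Finset.card_range, nsmul_eq_mul]
  rw [← ENNReal.ofReal_natCast (6*n), ← ENNReal.ofReal_mul (by positivity),
    ← ENNReal.ofReal_mul (by positivity), ← ENNReal.ofReal_mul (by positivity)]
  apply ENNReal.ofReal_le_ofReal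
  have h6n' : ((6*n:ℕ):ℝ) * ρ = 2*π := h6n
  apply le_of_eq
  linear_combination (R^2 * (ρ + π - off)) * h6n'


/-- The grid box for column `i`, row `j`, mesh `ρ`, margin `δ`. -/
def Qbox (ρ δ : ℝ) (i j : ℕ) : Set (Fin 2 → ℝ) :=
  Box (Set.Icc ((i:ℝ)*ρ + δ) ((i:ℝ)*ρ + ρ - δ))
      (Set.Icc ((i:ℝ)*ρ + ρ + (j:ℝ)*ρ + δ) ((i:ℝ)*ρ + ρ + (j:ℝ)*ρ + ρ - δ))

lemma icc_sep {c c' w d : ℝ} (hd : 0 < d) (h : c + w ≤ c') :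
    Disjoint (Set.Icc (c+d) (c+w-d)) (Set.Icc (c'+d) (c'+w-d)) := by
  rw [Set.disjoint_left]
  rintro z ⟨h1, h2⟩ ⟨h3, h4⟩
  linarith

lemma box_disj_fst {I I' J J' : Set ℝ} (h : Disjoint I I') : Disjoint (Box I J) (Box I' J') := by
  rw [Set.disjoint_left]
  rintro p ⟨h1, h2⟩ ⟨h3, h4⟩
  exact Set.disjoint_left.1 h h1 h3

lemma box_disj_snd {I I' J J' : Set ℝ} (h : Disjoint J J') : Disjoint (Box I J) (Box I' J') := by
  rw [Set.disjoint_left]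
  rintro p ⟨h1, h2⟩ ⟨h3, h4⟩
  exact Set.disjoint_left.1 h h2 h4

lemma lower_est {R : ℝ} (hR : 0 < R) (n : ℕ) (hn : 3 ≤ n) (jmin : ℕ)
    {S : Set (Fin 2 → ℝ)} (hST : S ⊆ Tinj)
    (hQS : ∀ i j : ℕ, i < 6*n → jmin ≤ j → j < 3*n - 1 →
      Qbox (π/(3*n)) (π/(3*n)/n) i j ⊆ S) :
    ENNReal.ofReal (((6*n*(3*n-1-jmin) : ℕ):ℝ) *
        ((R * (1 - (π/(3*n))^2/4))^2 * (π/(3*n) - 2*(π/(3*n)/n))^2))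
      ≤ μH[2] (F hR '' S) := by
  have hπ := Real.pi_pos
  have hπ4 := Real.pi_le_four
  set ρ : ℝ := π/(3*n) with hρdef
  set δ : ℝ := ρ/n with hδdef
  have hn0 : (0:ℝ) < (n:ℕ) := by exact_mod_cast (by omega : 0 < n)
  have hn3 : (3:ℝ) ≤ (n:ℕ) := by exact_mod_cast hn
  have hρ0 : 0 < ρ := by positivity
  have hδ0 : 0 < δ := by positivity
  have hδρ : 3 * δ ≤ ρ := by
    rw [hδdef, ← mul_div_assoc, div_le_iff₀ hn0]
    nlinarith
  have hρ1 : ρ ≤ 1 := by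
    rw [hρdef, div_le_one (by positivity)]
    nlinarith
  have hρ2 : ρ ≤ π/2 := by
    rw [hρdef, div_le_div_iff₀ (by positivity) (by norm_num)]
    nlinarith
  set t : Finset (ℕ × ℕ) := Finset.range (6*n) ×ˢ Finset.Ico jmin (3*n-1) with ht
  have key := lower_sum (t := t) (Q := fun k => Qbox ρ δ k.1 k.2) (S := S) hR hρ0 hρ1 hρ2
    ?_ hST ?_ ?_ ?_
  · refine le_trans (le_of_eq ?_) key
    have hterm : ∀ k ∈ t, ENNReal.ofReal ((R * (1 - ρ^2/4))^2) * volume (Qbox ρ δ k.1 k.2)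
        = ENNReal.ofReal (((R * (1 - ρ^2/4))^2 * (ρ - 2*δ)^2)) := by
      intro k _
      rw [Qbox, volume_box, Real.volume_Icc, Real.volume_Icc]
      rw [show ((k.1:ℝ)*ρ + ρ - δ) - ((k.1:ℝ)*ρ + δ) = ρ - 2*δ by ring,
        show ((k.1:ℝ)*ρ + ρ + (k.2:ℝ)*ρ + ρ - δ) - ((k.1:ℝ)*ρ + ρ + (k.2:ℝ)*ρ + δ) = ρ - 2*δ
          by ring]
      have hw : (0:ℝ) ≤ ρ - 2*δ := by linarith
      rw [← ENNReal.ofReal_mul hw, ← ENNReal.ofReal_mul (by positivity)]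
      congr 1
      ring
    rw [Finset.sum_congr rfl hterm, Finset.sum_const]
    rw [ht, Finset.card_product, Finset.card_range, Nat.card_Ico, nsmul_eq_mul]
    rw [← ENNReal.ofReal_natCast, ← ENNReal.ofReal_mul (by positivity)]
  · -- hsub
    rintro ⟨i, j⟩ hk
    rw [ht, Finset.mem_product, Finset.mem_range, Finset.mem_Ico] at hk
    exact hQS i j hk.1 hk.2.1 hk.2.2
  · -- hsmall
    rintro ⟨i, j⟩ _ p hp q hq
    obtain ⟨hp1, hp2⟩ := hp
    obtain ⟨hq1, hq2⟩ := hq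
    rw [dist_pi_le_iff hρ0.le]
    intro m
    fin_cases m
    · show dist (p 0) (q 0) ≤ ρ
      rw [Real.dist_eq, abs_le]
      obtain ⟨hpa, hpb⟩ := hp1
      obtain ⟨hqa, hqb⟩ := hq1
      constructor <;> linarith
    · show dist (p 1) (q 1) ≤ ρ
      rw [Real.dist_eq, abs_le]
      obtain ⟨hpa, hpb⟩ := hp2
      obtain ⟨hqa, hqb⟩ := hq2
      constructor <;> linarith
  · -- hcomp
    rintro ⟨i, j⟩ _
    exact isCompact_box
  · -- hdisj
    rintro ⟨i, j⟩ _ ⟨i', j'⟩ _ hne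
    simp only [Function.onFun]
    rcases Nat.lt_trichotomy i i' with hii | hii | hii
    · apply box_disj_fst
      apply icc_sep hδ0
      have : (i:ℝ) + 1 ≤ (i':ℝ) := by exact_mod_cast hii
      nlinarith
    · subst hii
      have hjj : j ≠ j' := by
        intro hcon
        exact hne (by rw [hcon])
      rcases Nat.lt_trichotomy j j' with hjj' | hjj' | hjj'
      · apply box_disj_snd
        apply icc_sep hδ0
        have : (j:ℝ) + 1 ≤ (j':ℝ) := by exact_mod_cast hjj'
        nlinarith
      · exact absurd hjj' hjj
      · apply box_disj_snd
        apply Disjoint.symm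
        apply icc_sep hδ0
        have : (j':ℝ) + 1 ≤ (j:ℝ) := by exact_mod_cast hjj'
        nlinarith
    · apply box_disj_fst
      apply Disjoint.symm
      apply icc_sep hδ0
      have : (i':ℝ) + 1 ≤ (i:ℝ) := by exact_mod_cast hii
      nlinarith


lemma tinj_sub_sfull : Tinj ⊆ Sfull := by
  rintro p ⟨h0, h1, h2, h3⟩
  exact ⟨h0, h1, h2, h3.le⟩

/-- Membership facts for grid boxes. -/
lemma qbox_mem {n : ℕ} (hn : 3 ≤ n) {i j : ℕ} (hi : i < 6*n) (hj : j < 3*n - 1)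
    {p : Fin 2 → ℝ} (hp : p ∈ Qbox (π/(3*n)) (π/(3*n)/n) i j) :
    0 ≤ p 0 ∧ p 0 < 2*π ∧ ((j:ℝ) * (π/(3*n)) < p 1 - p 0) ∧ p 1 - p 0 < π := by
  have hπ := Real.pi_pos
  set ρ : ℝ := π/(3*n) with hρdef
  set δ : ℝ := ρ/n with hδdef
  have hn0 : (0:ℝ) < (n:ℕ) := by exact_mod_cast (by omega : 0 < n)
  have hρ0 : 0 < ρ := by positivity
  have hδ0 : 0 < δ := by positivity
  obtain ⟨⟨ha1, ha2⟩, ⟨hb1, hb2⟩⟩ := hp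
  have h6n : 6*(n:ℝ)*ρ = 2*π := by rw [hρdef]; field_simp; try ring
  have h3n : 3*(n:ℝ)*ρ = π := by rw [hρdef]; field_simp; try ring
  have hi' : (i:ℝ) + 1 ≤ 6*(n:ℝ) := by exact_mod_cast hi
  have hj' : (j:ℝ) + 2 ≤ 3*(n:ℝ) := by
    have : j + 2 ≤ 3*n := by omega
    exact_mod_cast this
  refine ⟨by nlinarith, ?_, ?_, ?_⟩
  · nlinarith
  · nlinarith
  · nlinarith

lemma qbox_sub_tinj {n : ℕ} (hn : 3 ≤ n) {i j : ℕ} (hi : i < 6*n) (hj : j < 3*n - 1) :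
    Qbox (π/(3*n)) (π/(3*n)/n) i j ⊆ Tinj := by
  intro p hp
  obtain ⟨h0, h1, h2, h3⟩ := qbox_mem hn hi hj hp
  have hn0 : (0:ℝ) < (n:ℕ) := by exact_mod_cast (by omega : 0 < n)
  have hπ := Real.pi_pos
  have : (0:ℝ) ≤ (j:ℝ) * (π/(3*n)) := by positivity
  exact ⟨h0, h1, by linarith, h3⟩

lemma qbox_sub_snum {n : ℕ} (hn : 3 ≤ n) {i j : ℕ} (hi : i < 6*n) (hjmin : 2*n ≤ j)
    (hj : j < 3*n - 1) :
    Qbox (π/(3*n)) (π/(3*n)/n) i j ⊆ Snum := by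
  intro p hp
  obtain ⟨h0, h1, h2, h3⟩ := qbox_mem hn hi hj hp
  have hn0 : (0:ℝ) < (n:ℕ) := by exact_mod_cast (by omega : 0 < n)
  have hπ := Real.pi_pos
  have hjmin' : 2*(n:ℝ) ≤ (j:ℝ) := by exact_mod_cast hjmin
  have h2n : 2*(n:ℝ)*(π/(3*n)) = 2*π/3 := by field_simp; try ring
  have : 2*π/3 ≤ (j:ℝ)*(π/(3*n)) := by
    rw [← h2n]
    apply mul_le_mul_of_nonneg_right hjmin' (by positivity)
  exact ⟨h0, h1, by linarith, h3.le⟩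

lemma tendsto_ofReal_comp (g : ℝ → ℝ) (hg : Continuous g) :
    Tendsto (fun n : ℕ => ENNReal.ofReal (g (1/(n:ℝ)))) atTop (𝓝 (ENNReal.ofReal (g 0))) :=
  (ENNReal.continuous_ofReal.tendsto _).comp
    ((hg.tendsto 0).comp tendsto_one_div_atTop_nhds_zero_nat)

end Bertrand

open Bertrand

/-- Under the normalized 2-dimensional Hausdorff measure on the space of chords of a
circle of radius `R`, the probability that a random chord is longer than the side
`√3 R` of the inscribed equilateral triangle equals `1/3`. -/
theorem bertrand_probability (R : ℝ) (hR : 0 < R) :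
    μH[2] {χ : Chords R | Real.sqrt 3 * R < Metric.diam (χ.1 : Set ℂ)} /
      μH[2] (Set.univ : Set (Chords R)) = 1 / 3 := by
  have hπ := Real.pi_pos
  -- upper bound for the event
  have hEupper : μH[2] (F hR '' Snum) ≤ ENNReal.ofReal (R^2 * (2*π^2/3)) := by
    have hcont : Continuous (fun e : ℝ => R^2*(2*π)*((π - 2*π/3) + (π/3)*e)) := by fun_prop
    have hlim := tendsto_ofReal_comp _ hcont
    have hval : R^2*(2*π)*((π - 2*π/3) + (π/3)*(0:ℝ)) = R^2 * (2*π^2/3) := by ring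
    rw [hval] at hlim
    refine ge_of_tendsto hlim (eventually_atTop.2 ⟨1, fun n hn => ?_⟩)
    refine le_trans (upper_est hR n hn (2*π/3) (by positivity) snum_sub_sfull ?_) (le_of_eq ?_)
    · rintro p ⟨h0, h1, h2, h3⟩
      linarith
    · congr 1
      have hn0 : ((n:ℕ):ℝ) ≠ 0 := by
        have : (0:ℝ) < (n:ℕ) := by exact_mod_cast hn
        linarith
      field_simp
      try ring
  -- lower bound for the event
  have hElower : ENNReal.ofReal (R^2 * (2*π^2/3)) ≤ μH[2] (F hR '' Snum) := by
    have hcont : Continuous (fun e : ℝ =>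
        (2*π^2/3)*(1-e) * ((R*(1 - (π*e/3)^2/4))^2 * (1-2*e)^2)) := by fun_prop
    have hlim := tendsto_ofReal_comp _ hcont
    have hval : (2*π^2/3)*(1-(0:ℝ)) * ((R*(1 - (π*(0:ℝ)/3)^2/4))^2 * (1-2*(0:ℝ))^2)
        = R^2 * (2*π^2/3) := by ring
    rw [hval] at hlim
    refine le_of_tendsto hlim (eventually_atTop.2 ⟨3, fun n hn => ?_⟩)
    have hkey := lower_est hR n hn (2*n) (S := Snum ∩ Tinj) Set.inter_subset_right
      (fun i j hi hjmin hj => Set.subset_inter (qbox_sub_snum hn hi hjmin hj)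
        (qbox_sub_tinj hn hi hj))
    refine le_trans (le_of_eq ?_) (le_trans hkey (measure_mono
      (Set.image_mono Set.inter_subset_left)))
    congr 1
    have hn0 : (0:ℝ) < ((n:ℕ):ℝ) := by exact_mod_cast (by omega : 0 < n)
    rw [show 3*n-1-2*n = n-1 from by omega]
    have h1n : (1:ℕ) ≤ n := by omega
    push_cast [h1n]
    field_simp
    try ring
  -- bounds for the whole space
  have hUupper : μH[2] (F hR '' Sfull) ≤ ENNReal.ofReal (R^2 * (2*π^2)) := by
    have hcont : Continuous (fun e : ℝ => R^2*(2*π)*((π - 0) + (π/3)*e)) := by fun_prop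
    have hlim := tendsto_ofReal_comp _ hcont
    have hval : R^2*(2*π)*((π - 0) + (π/3)*(0:ℝ)) = R^2 * (2*π^2) := by ring
    rw [hval] at hlim
    refine ge_of_tendsto hlim (eventually_atTop.2 ⟨1, fun n hn => ?_⟩)
    refine le_trans (upper_est hR n hn 0 le_rfl le_rfl ?_) (le_of_eq ?_)
    · rintro p ⟨h0, h1, h2, h3⟩
      linarith
    · congr 1
      have hn0 : ((n:ℕ):ℝ) ≠ 0 := by
        have : (0:ℝ) < (n:ℕ) := by exact_mod_cast hn
        linarith
      field_simp
      try ring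
  have hUlower : ENNReal.ofReal (R^2 * (2*π^2)) ≤ μH[2] (F hR '' Sfull) := by
    have hcont : Continuous (fun e : ℝ =>
        (2*π^2/3)*(3-e) * ((R*(1 - (π*e/3)^2/4))^2 * (1-2*e)^2)) := by fun_prop
    have hlim := tendsto_ofReal_comp _ hcont
    have hval : (2*π^2/3)*(3-(0:ℝ)) * ((R*(1 - (π*(0:ℝ)/3)^2/4))^2 * (1-2*(0:ℝ))^2)
        = R^2 * (2*π^2) := by ring
    rw [hval] at hlim
    refine le_of_tendsto hlim (eventually_atTop.2 ⟨3, fun n hn => ?_⟩)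
    have hkey := lower_est hR n hn 0 (S := Tinj) le_rfl
      (fun i j hi _ hj => qbox_sub_tinj hn hi hj)
    refine le_trans (le_of_eq ?_) (le_trans hkey (measure_mono
      (Set.image_mono tinj_sub_sfull)))
    congr 1
    have hn0 : (0:ℝ) < ((n:ℕ):ℝ) := by exact_mod_cast (by omega : 0 < n)
    rw [Nat.sub_zero]
    have h1n : (1:ℕ) ≤ 3*n := by omega
    push_cast [h1n]
    field_simp
    try ring
  have hE : μH[2] {χ : Chords R | Real.sqrt 3 * R < Metric.diam (χ.1 : Set ℂ)}
      = ENNReal.ofReal (R^2 * (2*π^2/3)) := by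
    rw [event_eq hR]
    exact le_antisymm hEupper hElower
  have hU : μH[2] (Set.univ : Set (Chords R)) = ENNReal.ofReal (R^2 * (2*π^2)) := by
    rw [univ_eq hR]
    exact le_antisymm hUupper hUlower
  rw [hE, hU]
  have hA : (0:ℝ) < R^2*(2*π^2) := by positivity
  rw [show R^2*(2*π^2/3) = (R^2*(2*π^2))/3 by ring,
    ENNReal.ofReal_div_of_pos (by norm_num : (0:ℝ) < 3)]
  set X := ENNReal.ofReal (R^2*(2*π^2)) with hX
  have hX0 : X ≠ 0 := (ENNReal.ofReal_pos.2 hA).ne'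
  have hXt : X ≠ ⊤ := ENNReal.ofReal_ne_top
  have h3 : ENNReal.ofReal (3:ℝ) = (3:ℝ≥0∞) := by norm_num
  rw [h3, div_eq_mul_inv, div_eq_mul_inv, mul_right_comm,
    ENNReal.mul_inv_cancel hX0 hXt, one_mul, one_div]
end
end
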